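/- arXiv:1211.5170 — 8 statements merged into one kernel-verified Lean document; each statement's English description precedes it below -/
import Mathlib

section
/- Let ⟨p_n : n ∈ ω⟩ be a sequence of 0-conditions and ⟨k_n : n ∈ ω⟩ a strictly increasing sequence of positive natural numbers such that p_{n+1} ≤_{k_n} p_n for every n. Define q as follows: s^q = s^{p_n} (this set is the same for all n); c^q_m = c^{p_0}_m for m < k_0; and c^q_m = c^{p_{n+1}}_m for m ∈ [k_n, k_{n+1}). Then q is a 0-condition and q ≤_{k_n} p_n for every n ∈ ω. -/
open scoped Classical

/-- A norm on `x ⊆ ω`: a function on finite subsets of `x` satisfying the three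
norm axioms. -/
structure IsNorm (x : Set ℕ) (nor : Finset ℕ → ℕ) : Prop where
  one_lt_card : ∀ s : Finset ℕ, ↑s ⊆ x → 0 < nor s → 1 < s.card
  mono : ∀ s t : Finset ℕ, ↑s ⊆ x → ↑t ⊆ x → s ⊆ t → nor s ≤ nor t
  split : ∀ (s s₀ s₁ : Finset ℕ) (n : ℕ), ↑s ⊆ x → 0 < n → n ≤ nor s →
    s = s₀ ∪ s₁ → n - 1 ≤ nor s₀ ∨ n - 1 ≤ nor s₁

/-- A creature: a nonempty finite set `s` together with a norm on it giving `s`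
positive norm. -/
structure Creature where
  s : Finset ℕ
  ne : s.Nonempty
  nor : Finset ℕ → ℕ
  isNorm : IsNorm (↑s) nor
  pos : 0 < nor s

/-- `c < d` for creatures: `max s_c < min s_d` and `nor_c(s_c) < nor_d(s_d)`. -/
def Creature.Lt (c d : Creature) : Prop :=
  c.s.max' c.ne < d.s.min' d.ne ∧ c.nor c.s < d.nor d.s

/-- A `0`-condition. -/
structure ZeroCond where
  stem : Finset ℕ
  c : ℕ → Creature
  incr : ∀ n : ℕ, (c n).Lt (c (n + 1))
  stem_lt : ∀ m ∈ stem, m < (c 0).s.min' (c 0).ne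

/-- `int(p) = ⋃ₙ s^p_n`. -/
def ZeroCond.int (p : ZeroCond) : Set ℕ := ⋃ n : ℕ, ((p.c n).s : Set ℕ)

/-- The extension relation `q ≤ p` on `0`-conditions. -/
def ZeroCond.Le (q p : ZeroCond) : Prop :=
  p.stem ⊆ q.stem ∧
  (↑q.stem : Set ℕ) \ (↑p.stem : Set ℕ) ⊆ p.int ∧
  (∃ n₀ : ℕ, IsLeast {n : ℕ | ∀ m : ℕ, n ≤ m → ∀ x ∈ (p.c m).s, x ∉ q.stem} n₀ ∧
    ∃ i : ℕ → ℕ, i 0 = n₀ ∧ StrictMono i ∧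
      ∀ n : ℕ, ((q.c n).s : Set ℕ) ⊆ ⋃ m ∈ Set.Ico (i n) (i (n + 1)), ((p.c m).s : Set ℕ)) ∧
  ∀ n : ℕ, ∀ t ⊆ (q.c n).s, 0 < (q.c n).nor t → ∃ m : ℕ, 0 < (p.c m).nor (t ∩ (p.c m).s)

/-- `q ≤₀ p` iff `q ≤ p` and the stems agree. -/
def ZeroCond.Le0 (q p : ZeroCond) : Prop := q.Le p ∧ q.stem = p.stem

/-- For `n > 0`, `q ≤ₙ p` iff `q ≤₀ p` and `c^q_m = c^p_m` for all `m ≤ n - 1`. -/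
def ZeroCond.LeN (n : ℕ) (q p : ZeroCond) : Prop := q.Le0 p ∧ ∀ m < n, q.c m = p.c m

/-- `A_p`: nonempty finite sets `s` with `nor^p_n(s ∩ s^p_n) > 0` for some `n`. -/
def Ap (p : ZeroCond) : Set (Finset ℕ) :=
  {s | s.Nonempty ∧ ∃ n : ℕ, 0 < (p.c n).nor (s ∩ (p.c n).s)}

/-- `C_p = {ω \ a : a ⊆ ω and no s ∈ A_p is contained in a}`. -/
def Cp (p : ZeroCond) : Set (Set ℕ) :=
  {b | ∀ s ∈ Ap p, ¬ (↑s : Set ℕ) ⊆ bᶜ}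

/-- `F_p`: the filter generated by `C_p` together with the Fréchet (cofinite) filter. -/
def Fp (p : ZeroCond) : Filter ℕ := Filter.generate (Cp p) ⊓ Filter.cofinite


/-- Chain lemma: earlier creatures lie entirely below later ones. -/
lemma ZeroCond.max_lt_min (P : ZeroCond) : ∀ j m, m < j →
    (P.c m).s.max' (P.c m).ne < (P.c j).s.min' (P.c j).ne := by
  intro j
  induction j with
  | zero => intro m h; omega
  | succ j ih =>
    intro m h
    rcases Nat.lt_succ_iff_lt_or_eq.mp h with h' | h'
    · exact lt_of_lt_of_le (ih m h')
        (le_trans (Finset.min'_le _ _ (Finset.max'_mem _ _)) (le_of_lt (P.incr j).1))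
    · subst h'; exact (P.incr m).1

lemma ZeroCond.lt_of_mem_mem (P : ZeroCond) {m j : ℕ} (h : m < j) {x y : ℕ}
    (hx : x ∈ (P.c m).s) (hy : y ∈ (P.c j).s) : x < y :=
  lt_of_le_of_lt (Finset.le_max' _ x hx)
    (lt_of_lt_of_le (P.max_lt_min j m h) (Finset.min'_le _ y hy))

lemma ZeroCond.min0_le (P : ZeroCond) {m x : ℕ} (hx : x ∈ (P.c m).s) :
    (P.c 0).s.min' (P.c 0).ne ≤ x := by
  rcases Nat.eq_zero_or_pos m with rfl | h
  · exact Finset.min'_le _ x hx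
  · exact le_of_lt (P.lt_of_mem_mem h (Finset.min'_mem _ _) hx)

lemma ZeroCond.stem_lt_mem (P : ZeroCond) {x m y : ℕ} (hx : x ∈ P.stem)
    (hy : y ∈ (P.c m).s) : x < y :=
  lt_of_lt_of_le (P.stem_lt x hx) (P.min0_le hy)

/-- Composition of the interval-partition reindexing functions. -/
def Fcomp (ii : ℕ → ℕ → ℕ) (n : ℕ) : ℕ → ℕ → ℕ
  | 0 => id
  | (j+1) => fun m => Fcomp ii n j (ii (n + j) m)

/-- Fusion lemma: the diagonal condition `q` built from a fusion sequence is a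
`0`-condition and `q ≤_{k_n} p_n` for every `n`. -/
theorem fusion (p : ℕ → ZeroCond) (k : ℕ → ℕ)
    (hkpos : ∀ n : ℕ, 0 < k n) (hkmono : StrictMono k)
    (hle : ∀ n : ℕ, ZeroCond.LeN (k n) (p (n + 1)) (p n))
    (d : ℕ → Creature)
    (hd0 : ∀ m : ℕ, m < k 0 → d m = (p 0).c m)
    (hdsucc : ∀ n m : ℕ, k n ≤ m → m < k (n + 1) → d m = (p (n + 1)).c m) :
    ∃ q : ZeroCond, q.stem = (p 0).stem ∧ q.c = d ∧
      ∀ n : ℕ, ZeroCond.LeN (k n) q (p n) := by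
  -- basic facts about k
  have hkge : ∀ m, m + 1 ≤ k m := by
    intro m
    induction m with
    | zero => exact hkpos 0
    | succ m ih => exact lt_of_le_of_lt ih (hkmono (Nat.lt_succ_self m))
  -- stems are all equal
  have hstem : ∀ n, (p n).stem = (p 0).stem := by
    intro n
    induction n with
    | zero => rfl
    | succ n ih => rw [(hle n).1.2, ih]
  -- creatures agree below k N
  have hagree : ∀ N m, m < k N → (p (N + 1)).c m = (p N).c m := fun N => (hle N).2
  -- d agrees with p N below k N
  have hd : ∀ N m, m < k N → d m = (p N).c m := by
    intro N
    induction N with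
    | zero => exact hd0
    | succ N ih =>
      intro m hm
      by_cases h : m < k N
      · rw [hagree N m h]; exact ih m h
      · exact hdsucc N m (le_of_not_gt h) hm
  -- extract normalized witnesses from the fusion hypotheses
  have hW : ∀ N, ∃ i : ℕ → ℕ, i 0 = 0 ∧ StrictMono i ∧
      (∀ m, (((p (N + 1)).c m).s : Set ℕ) ⊆
        ⋃ l ∈ Set.Ico (i m) (i (m + 1)), (((p N).c l).s : Set ℕ)) ∧
      ∀ m, m < k N → i m = m := by
    intro N
    obtain ⟨⟨hLe, hstemeq⟩, hagr⟩ := hle N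
    obtain ⟨hsub, hdiff, ⟨n₀, hL, i, hi0, hmono, hcov⟩, hnor⟩ := hLe
    have h0mem : (0 : ℕ) ∈ {n : ℕ | ∀ m : ℕ, n ≤ m →
        ∀ x ∈ ((p N).c m).s, x ∉ (p (N + 1)).stem} := by
      intro m _ x hx hmem
      rw [hstemeq] at hmem
      exact absurd ((p N).stem_lt_mem hmem hx) (lt_irrefl x)
    have hn0 : n₀ = 0 := Nat.le_zero.mp (hL.2 h0mem)
    subst hn0
    refine ⟨i, hi0, hmono, hcov, ?_⟩
    intro m hm
    obtain ⟨x, hx⟩ := ((p (N + 1)).c m).ne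
    have hx' : x ∈ ((p N).c m).s := by rw [← hagr m hm]; exact hx
    have hmem : (x : ℕ) ∈ ⋃ l ∈ Set.Ico (i m) (i (m + 1)), (((p N).c l).s : Set ℕ) :=
      hcov m (Finset.mem_coe.mpr hx)
    simp only [Set.mem_iUnion, Set.mem_Ico, exists_prop, Finset.mem_coe] at hmem
    obtain ⟨l, ⟨hl1, hl2⟩, hxl⟩ := hmem
    have hlm : l = m := by
      by_contra hne
      rcases Nat.lt_or_ge l m with h' | h'
      · exact absurd ((p N).lt_of_mem_mem h' hxl hx') (lt_irrefl x)
      · exact absurd ((p N).lt_of_mem_mem (lt_of_le_of_ne h' (Ne.symm hne)) hx' hxl)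
          (lt_irrefl x)
    have h1 : i m ≤ m := hlm ▸ hl1
    have h2 : m ≤ i m := hmono.le_apply
    omega
  choose ii hii0 hiimono hiicov hiifix using hW
  -- properties of the composed reindexings
  have hFmono : ∀ n j, StrictMono (Fcomp ii n j) := by
    intro n j
    induction j with
    | zero => exact strictMono_id
    | succ j ih => exact fun a b hab => ih ((hiimono (n + j)) hab)
  have hFfix : ∀ n j m, m < k (n + j) → Fcomp ii n (j + 1) m = Fcomp ii n j m := by
    intro n j m hm
    show Fcomp ii n j (ii (n + j) m) = Fcomp ii n j m
    rw [hiifix (n + j) m hm]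
  have hFle : ∀ n j m, Fcomp ii n j m ≤ Fcomp ii n (j + 1) m := by
    intro n j m
    exact (hFmono n j).monotone (hiimono (n + j)).le_apply
  have hFcov : ∀ n j m, (((p (n + j)).c m).s : Set ℕ) ⊆
      ⋃ l ∈ Set.Ico (Fcomp ii n j m) (Fcomp ii n j (m + 1)), (((p n).c l).s : Set ℕ) := by
    intro n j
    induction j with
    | zero =>
      intro m x hx
      simp only [Nat.add_zero] at hx
      refine Set.mem_iUnion₂.mpr ⟨m, ?_, hx⟩
      exact ⟨le_refl m, Nat.lt_succ_self m⟩
    | succ j ih =>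
      intro m x hx
      have hx1 := hiicov (n + j) m hx
      simp only [Set.mem_iUnion, Set.mem_Ico, exists_prop] at hx1
      obtain ⟨t, ⟨ht1, ht2⟩, hxt⟩ := hx1
      have hx2 := ih t hxt
      simp only [Set.mem_iUnion, Set.mem_Ico, exists_prop] at hx2
      obtain ⟨l, ⟨hl1, hl2⟩, hxl⟩ := hx2
      refine Set.mem_iUnion₂.mpr ⟨l, ⟨?_, ?_⟩, hxl⟩
      · exact le_trans ((hFmono n j).monotone ht1) hl1
      · exact lt_of_lt_of_le hl2 ((hFmono n j).monotone ht2)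
  -- the norm-preservation claim, composed along the chain
  have hnorm : ∀ n j m t, t ⊆ ((p (n + j)).c m).s → 0 < ((p (n + j)).c m).nor t →
      ∃ l, 0 < ((p n).c l).nor (t ∩ ((p n).c l).s) := by
    intro n j
    induction j with
    | zero =>
      intro m t ht hp
      simp only [Nat.add_zero] at ht hp
      exact ⟨m, by rwa [Finset.inter_eq_left.mpr ht]⟩
    | succ j ih =>
      intro m t ht hp
      obtain ⟨l', hl'⟩ := (hle (n + j)).1.1.2.2.2 m t ht hp
      obtain ⟨l, hl⟩ := ih l' (t ∩ ((p (n + j)).c l').s) Finset.inter_subset_right hl'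
      refine ⟨l, lt_of_lt_of_le hl ?_⟩
      refine ((p n).c l).isNorm.mono _ _ ?_ ?_ ?_
      · exact fun y hy => by
          simp only [Finset.coe_inter, Set.mem_inter_iff] at hy
          exact hy.2
      · exact fun y hy => by
          simp only [Finset.coe_inter, Set.mem_inter_iff] at hy
          exact hy.2
      · intro y hy
        simp only [Finset.mem_inter] at hy ⊢
        exact ⟨hy.1.1, hy.2⟩
  -- construct q
  have hd02 : d 0 = (p 0).c 0 := hd0 0 (hkpos 0)
  refine ⟨⟨(p 0).stem, d, ?_, ?_⟩, rfl, rfl, ?_⟩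
  · -- increasing
    intro m
    have h1 : d m = (p (m + 2)).c m := hd (m + 2) m (by have := hkge (m + 2); omega)
    have h2 : d (m + 1) = (p (m + 2)).c (m + 1) :=
      hd (m + 2) (m + 1) (by have := hkge (m + 2); omega)
    rw [h1, h2]
    exact (p (m + 2)).incr m
  · -- stem below first creature
    intro m hm
    rw [hd02]
    exact (p 0).stem_lt m hm
  · -- q ≤_{k n} p n
    intro n
    have hqstem : (p 0).stem = (p n).stem := (hstem n).symm
    refine ⟨⟨⟨?_, ?_, ?_, ?_⟩, hqstem⟩, fun m hm => hd n m hm⟩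
    · rw [hqstem]
    · intro x hx
      rw [hqstem] at hx
      exact absurd hx.1 hx.2
    · -- interval partition witness
      refine ⟨0, ⟨?_, fun a _ => Nat.zero_le a⟩, fun m => Fcomp ii n (m + 1) m, ?_, ?_, ?_⟩
      · intro m _ x hx hmem
        simp only at hmem
        rw [hqstem] at hmem
        exact absurd ((p n).stem_lt_mem hmem hx) (lt_irrefl x)
      · show Fcomp ii n 0 (ii (n + 0) 0) = 0
        simp only [Fcomp, id]
        exact hii0 n
      · refine strictMono_nat_of_lt_succ ?_
        intro m
        have hs : Fcomp ii n (m + 2) m = Fcomp ii n (m + 1) m :=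
          hFfix n (m + 1) m (by have := hkge (n + (m + 1)); omega)
        calc Fcomp ii n (m + 1) m = Fcomp ii n (m + 2) m := hs.symm
          _ < Fcomp ii n (m + 2) (m + 1) := hFmono n (m + 2) (Nat.lt_succ_self m)
      · intro m x hx
        have hdm : d m = (p (n + (m + 1))).c m :=
          hd (n + (m + 1)) m (by have := hkge (n + (m + 1)); omega)
        have hx' : (x : ℕ) ∈ (((p (n + (m + 1))).c m).s : Set ℕ) := by
          simp only at hx
          rw [hdm] at hx
          exact hx
        have hcv := hFcov n (m + 1) m hx'
        simp only [Set.mem_iUnion, Set.mem_Ico, exists_prop] at hcv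
        obtain ⟨l, ⟨hl1, hl2⟩, hxl⟩ := hcv
        refine Set.mem_iUnion₂.mpr ⟨l, ⟨hl1, ?_⟩, hxl⟩
        exact lt_of_lt_of_le hl2 (hFle n (m + 1) (m + 1))
    · -- norms
      intro m t ht hp0
      have hdm : d m = (p (n + (m + 1))).c m :=
        hd (n + (m + 1)) m (by have := hkge (n + (m + 1)); omega)
      simp only at ht hp0
      rw [hdm] at ht hp0
      exact hnorm n (m + 1) m t ht hp0
end

section
/- For every 0-condition p: (a) the set C_p is a closed subset of P(ω); (b) the filter F_p is proper (it does not contain the empty set, so all of its members are infinite); and (c) int(p) ∈ F_p. -/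
open scoped Classical

/-- The characteristic function of `a ⊆ ω`, identifying `P(ω)` with Cantor space `2^ω`. -/
noncomputable def chi (a : Set ℕ) : ℕ → Bool := fun n => if n ∈ a then true else false

/-- A family of subsets of `ω` is closed when viewed as a subset of Cantor space. -/
def CantorClosed (C : Set (Set ℕ)) : Prop := IsClosed (chi '' C)

/-- A family of subsets of `ω` is compact when viewed as a subset of Cantor space. -/
def CantorCompact (C : Set (Set ℕ)) : Prop := IsCompact (chi '' C)

/-!
Each creature `c^p_n` is large: `nor^p_n(s^p_n) > n` and `s^p_n` lies above `n`. Since a norm can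
lose at most one unit each time its set is split in two, a set of norm greater than `k` covered by
`k` sets has a subset of positive norm inside one of them. Applied to `s^p_n` and the complements
of `k < n` members of `C_p`, this shows that those members have a common point in `s^p_n`: a
positive-norm subset of some `bᶜ` would be an element of `A_p` inside `bᶜ`. So finite
intersections from `C_p` are infinite, which survives intersecting with a cofinite set.
Every `s ∈ A_p` meets `int(p)`, because a positive-norm subset of `s^p_n` is nonempty.
-/

lemma IsNorm.nonempty_of_pos {x : Set ℕ} {nor : Finset ℕ → ℕ} (h : IsNorm x nor)
    {s : Finset ℕ} (hs : ↑s ⊆ x) (hpos : 0 < nor s) : s.Nonempty :=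
  Finset.card_pos.mp (by have := h.one_lt_card s hs hpos; omega)

lemma IsNorm.exists_pos_subset_of_subset_biUnion {x : Set ℕ} {nor : Finset ℕ → ℕ}
    (h : IsNorm x nor) {ι : Type*} (I : Finset ι) (a : ι → Set ℕ) {s : Finset ℕ}
    (hs : ↑s ⊆ x) (hnor : I.card < nor s) (hcov : ↑s ⊆ ⋃ i ∈ I, a i) :
    ∃ i ∈ I, ∃ t ⊆ s, ↑t ⊆ a i ∧ 0 < nor t := by
  induction I using Finset.induction_on generalizing s with
  | empty =>
    obtain ⟨m, hm⟩ := h.nonempty_of_pos hs hnor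
    simpa using hcov hm
  | insert i I hi ih =>
    rw [Finset.card_insert_of_notMem hi] at hnor
    have hsplit : s = s.filter (· ∈ a i) ∪ s.filter (· ∉ a i) :=
      (Finset.filter_union_filter_not_eq _ s).symm
    have hpieces :
        I.card + 1 ≤ nor (s.filter (· ∈ a i)) ∨ I.card + 1 ≤ nor (s.filter (· ∉ a i)) :=
      h.split s _ _ (I.card + 2) hs (by omega) hnor hsplit
    rcases hpieces with hin | hout
    · exact ⟨i, Finset.mem_insert_self i I, _, Finset.filter_subset _ s,
        fun m hm => (Finset.mem_filter.mp hm).2, (Nat.succ_pos _).trans_le hin⟩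
    · have hcov' : ↑(s.filter (· ∉ a i)) ⊆ ⋃ j ∈ I, a j := by
        intro m hm
        obtain ⟨hms, hmi⟩ := Finset.mem_filter.mp hm
        obtain ⟨j, hj, hmj⟩ := Set.mem_iUnion₂.mp (hcov hms)
        rcases Finset.mem_insert.mp hj with rfl | hj
        · exact absurd hmj hmi
        · exact Set.mem_biUnion hj hmj
      obtain ⟨j, hj, t, hts, hta, htpos⟩ :=
        ih ((Finset.coe_subset.mpr (Finset.filter_subset _ s)).trans hs) (by omega) hcov'
      exact ⟨j, Finset.mem_insert_of_mem hj, t, hts.trans (Finset.filter_subset _ s), hta, htpos⟩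

lemma Filter.infinite_of_mem_generate {α : Type*} {C : Set (Set α)}
    (hC : ∀ t ⊆ C, t.Finite → (⋂₀ t).Infinite) {U : Set α} (hU : U ∈ Filter.generate C) :
    U.Infinite := by
  obtain ⟨t, htC, htfin, htU⟩ := Filter.mem_generate_iff.mp hU
  exact (hC t htC htfin).mono htU

lemma Filter.infinite_of_mem_inf_cofinite {α : Type*} {f : Filter α}
    (hf : ∀ U ∈ f, U.Infinite) {X : Set α} (hX : X ∈ f ⊓ Filter.cofinite) : X.Infinite := by
  obtain ⟨U, hU, V, hV, rfl⟩ := Filter.mem_inf_iff.mp hX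
  exact ((hf U hU).sdiff (Filter.mem_cofinite.mp hV)).mono
    fun m hm => ⟨hm.1, not_not.mp hm.2⟩

lemma image_chi_eq_preimage (S : Set (Set ℕ)) :
    chi '' S = (fun f : ℕ → Bool => {n | f n = true}) ⁻¹' S := by
  ext f
  constructor
  · rintro ⟨b, hb, rfl⟩
    simpa [chi] using hb
  · intro hf
    refine ⟨_, hf, funext fun n => ?_⟩
    cases hfn : f n <;> simp [chi, hfn]

lemma cantorClosed_setOf_forall_not_subset_compl (A : Set (Finset ℕ)) :
    CantorClosed {b | ∀ s ∈ A, ¬ (↑s : Set ℕ) ⊆ bᶜ} := by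
  have hchi : chi '' {b | ∀ s ∈ A, ¬ (↑s : Set ℕ) ⊆ bᶜ} =
      ⋂ s ∈ A, ⋃ m ∈ (↑s : Set ℕ), {f : ℕ → Bool | f m = true} := by
    ext f
    simp [image_chi_eq_preimage, Set.not_subset]
  rw [CantorClosed, hchi]
  exact isClosed_biInter fun s _ => s.finite_toSet.isClosed_biUnion fun m _ =>
    isClosed_eq (continuous_apply m) continuous_const

namespace ZeroCond

variable (p : ZeroCond)

lemma lt_nor_c (n : ℕ) : n < (p.c n).nor (p.c n).s := by
  have hmono : StrictMono fun n => (p.c n).nor (p.c n).s :=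
    strictMono_nat_of_lt_succ fun n => (p.incr n).2
  exact (Nat.lt_add_of_pos_right (p.c 0).pos).trans_le (by simpa using hmono.add_le_nat n 0)

lemma le_of_mem_c {n m : ℕ} (hm : m ∈ (p.c n).s) : n ≤ m := by
  have hmono : StrictMono fun n => (p.c n).s.min' (p.c n).ne :=
    strictMono_nat_of_lt_succ fun n =>
      ((p.c n).s.min'_le_max' (p.c n).ne).trans_lt (p.incr n).1
  exact (hmono.id_le n).trans ((p.c n).s.min'_le m hm)

lemma exists_mem_c_forall_mem (t : Finset (Set ℕ)) (htC : ↑t ⊆ Cp p) {n : ℕ}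
    (hn : t.card < n) : ∃ m ∈ (p.c n).s, ∀ b ∈ t, m ∈ b := by
  by_contra! hnone
  have hcov : ↑(p.c n).s ⊆ ⋃ b ∈ t, bᶜ := fun m hm => by
    obtain ⟨b, hbt, hmb⟩ := hnone m hm
    exact Set.mem_biUnion hbt hmb
  obtain ⟨b, hbt, u, hus, hub, hupos⟩ := (p.c n).isNorm.exists_pos_subset_of_subset_biUnion
    t compl subset_rfl (hn.trans (p.lt_nor_c n)) hcov
  have huAp : u ∈ Ap p := ⟨(p.c n).isNorm.nonempty_of_pos (Finset.coe_subset.mpr hus) hupos,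
    n, by rwa [Finset.inter_eq_left.mpr hus]⟩
  exact htC hbt u huAp hub

lemma sInter_infinite {t : Set (Set ℕ)} (htC : t ⊆ Cp p) (htfin : t.Finite) :
    (⋂₀ t).Infinite := by
  refine Set.infinite_of_forall_exists_gt fun N => ?_
  obtain ⟨m, hmc, hmt⟩ := p.exists_mem_c_forall_mem htfin.toFinset (by simpa using htC)
    (n := htfin.toFinset.card + N + 1) (by omega)
  exact ⟨m, fun b hb => hmt b (htfin.mem_toFinset.mpr hb),
    (show N < _ by omega).trans_le (p.le_of_mem_c hmc)⟩

lemma int_mem_Cp : p.int ∈ Cp p := by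
  rintro s ⟨-, n, hpos⟩ hsub
  obtain ⟨m, hm⟩ := (p.c n).isNorm.nonempty_of_pos
    (Finset.coe_subset.mpr Finset.inter_subset_right) hpos
  exact hsub (Finset.mem_inter.mp hm).1 (Set.mem_iUnion.mpr ⟨n, (Finset.mem_inter.mp hm).2⟩)

end ZeroCond

/-- For every `0`-condition `p`: `C_p` is closed in `P(ω)`, the filter `F_p` is proper
(so all its members are infinite), and `int(p) ∈ F_p`. -/
theorem Cp_closed_Fp_proper (p : ZeroCond) :
    CantorClosed (Cp p) ∧ (∅ ∉ Fp p ∧ ∀ X ∈ Fp p, X.Infinite) ∧ p.int ∈ Fp p := by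
  have hinf : ∀ X ∈ Fp p, X.Infinite := fun X =>
    Filter.infinite_of_mem_inf_cofinite fun U => Filter.infinite_of_mem_generate
      fun _ htC htfin => p.sInter_infinite htC htfin
  exact ⟨cantorClosed_setOf_forall_not_subset_compl (Ap p),
    ⟨fun hempty => hinf ∅ hempty Set.finite_empty, hinf⟩,
    Filter.mem_inf_of_left (Filter.mem_generate_of_mem p.int_mem_Cp)⟩
end

section
/- Let ⟨X_α : α < ω₁⟩ be a sequence of nonempty closed subsets of [ω]^ω such that 𝒜 = ⋃_{α<ω₁} X_α is a MAD family, let p be a 0-condition, and let c ⊆ ω. Suppose that for every k ∈ ω and all α₀, …, α_k < ω₁ there exists a 1-condition q (with respect to 𝒜) such that q ≤₀ p, int(q) ⊆ c, and for every (a₀, …, a_k) ∈ X_{α₀} × ⋯ × X_{α_k} the set int(q) ∩ (a₀ ∪ ⋯ ∪ a_k) is finite. Then the filter on ω generated by F_p ∪ F(𝒜) ∪ {c} is proper (it does not contain the empty set). -/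
open scoped Classical

/-- An almost disjoint family: infinite sets with pairwise finite intersections. -/
def IsADFamily (A : Set (Set ℕ)) : Prop :=
  (∀ a ∈ A, a.Infinite) ∧ ∀ a ∈ A, ∀ b ∈ A, a ≠ b → (a ∩ b).Finite

/-- A MAD family: an infinite a.d. family such that every infinite set meets some
member infinitely. -/
def IsMADFamily (A : Set (Set ℕ)) : Prop :=
  IsADFamily A ∧ A.Infinite ∧ ∀ b : Set ℕ, b.Infinite → ∃ a ∈ A, (a ∩ b).Infinite

/-- `I(A)`: the ideal generated by `A` together with the finite sets. -/
def idealAD (A : Set (Set ℕ)) : Set (Set ℕ) :=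
  {x | ∃ F : Finset (Set ℕ), ↑F ⊆ A ∧ (x \ ⋃ a ∈ F, a).Finite}

/-- `F(A)`: the dual filter of `I(A)`. -/
def filterAD (A : Set (Set ℕ)) : Filter ℕ := Filter.generate {X : Set ℕ | Xᶜ ∈ idealAD A}

/-- A `1`-condition with respect to the a.d. family `A`. -/
def IsOneCond (A : Set (Set ℕ)) (p : ZeroCond) : Prop :=
  ∀ a ∈ idealAD A, ∀ k : ℕ, ∃ n : ℕ, k ≤ (p.c n).nor ((p.c n).s.filter (fun m => m ∉ a))

/-- The first uncountable ordinal. -/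
noncomputable def omega1 : Ordinal := (Cardinal.aleph 1).ord


lemma ideal_finite (A : Set (Set ℕ)) {x : Set ℕ} (hx : x.Finite) : x ∈ idealAD A :=
  ⟨∅, by simp, by simpa using hx⟩

lemma ideal_subset (A : Set (Set ℕ)) {x y : Set ℕ} (hxy : y ⊆ x) (hx : x ∈ idealAD A) :
    y ∈ idealAD A := by
  obtain ⟨F, hF, hfin⟩ := hx
  exact ⟨F, hF, hfin.subset (Set.diff_subset_diff_left hxy)⟩

lemma ideal_union (A : Set (Set ℕ)) {x y : Set ℕ} (hx : x ∈ idealAD A) (hy : y ∈ idealAD A) :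
    x ∪ y ∈ idealAD A := by
  obtain ⟨F₁, hF₁, hfin₁⟩ := hx
  obtain ⟨F₂, hF₂, hfin₂⟩ := hy
  refine ⟨F₁ ∪ F₂, ?_, ?_⟩
  · intro z hz
    rcases Finset.mem_union.mp hz with h | h
    · exact hF₁ h
    · exact hF₂ h
  · refine (hfin₁.union hfin₂).subset ?_
    intro z hz
    obtain ⟨hz1, hz2⟩ := hz
    rcases hz1 with h | h
    · exact Or.inl ⟨h, fun hc => hz2 (by
        obtain ⟨a, ha, hza⟩ := Set.mem_iUnion₂.mp hc
        exact Set.mem_iUnion₂.mpr ⟨a, Finset.mem_union_left _ ha, hza⟩)⟩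
    · exact Or.inr ⟨h, fun hc => hz2 (by
        obtain ⟨a, ha, hza⟩ := Set.mem_iUnion₂.mp hc
        exact Set.mem_iUnion₂.mpr ⟨a, Finset.mem_union_right _ ha, hza⟩)⟩

lemma ideal_biUnion (A : Set (Set ℕ)) (F : Finset (Set ℕ)) (f : Set ℕ → Set ℕ)
    (h : ∀ X ∈ F, f X ∈ idealAD A) : (⋃ X ∈ F, f X) ∈ idealAD A := by
  induction F using Finset.induction_on with
  | empty => simpa using ideal_finite A Set.finite_empty
  | @insert b F hb ih =>
    rw [Finset.set_biUnion_insert]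
    exact ideal_union A (h b (Finset.mem_insert_self _ _))
      (ih (fun X hX => h X (Finset.mem_insert_of_mem hX)))

lemma cover_split (x : Set ℕ) (nor : Finset ℕ → ℕ) (hn : IsNorm x nor)
    (B : Finset (Set ℕ)) :
    ∀ t : Finset ℕ, ↑t ⊆ x → B.card + 1 ≤ nor t → (↑t : Set ℕ) ⊆ (⋃ b ∈ B, b) →
      ∃ b ∈ B, ∃ s : Finset ℕ, s ⊆ t ∧ (↑s : Set ℕ) ⊆ b ∧ 0 < nor s := by
  induction B using Finset.induction_on with
  | empty =>
    intro t htx hcard hcov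
    exfalso
    simp only [Finset.card_empty] at hcard
    have h1 : 1 < t.card := hn.one_lt_card t htx (by omega)
    have h2 : 0 < t.card := by omega
    obtain ⟨m, hm⟩ := Finset.card_pos.mp h2
    simpa using hcov hm
  | @insert b B hb ih =>
    intro t htx hcard hcov
    have hcard' : B.card + 2 ≤ nor t := by
      rwa [Finset.card_insert_of_notMem hb] at hcard
    have hsplit := hn.split t (t.filter (fun m => m ∈ b)) (t.filter (fun m => m ∉ b))
      (B.card + 2) htx (by omega) hcard'
      (Finset.filter_union_filter_not_eq _ t).symm
    rcases hsplit with h | h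
    · refine ⟨b, Finset.mem_insert_self _ _, t.filter (fun m => m ∈ b),
        Finset.filter_subset _ _, ?_, by omega⟩
      intro m hm
      exact (Finset.mem_filter.mp hm).2
    · have hsub : (t.filter (fun m => m ∉ b)) ⊆ t := Finset.filter_subset _ _
      have hcov' : (↑(t.filter (fun m => m ∉ b)) : Set ℕ) ⊆ ⋃ b' ∈ B, b' := by
        intro m hm
        have hm' := Finset.mem_filter.mp hm
        have := hcov (Finset.mem_coe.mpr hm'.1)
        obtain ⟨b', hb', hmb'⟩ := Set.mem_iUnion₂.mp this
        rcases Finset.mem_insert.mp hb' with rfl | hbB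
        · exact absurd hmb' hm'.2
        · exact Set.mem_iUnion₂.mpr ⟨b', hbB, hmb'⟩
      obtain ⟨b', hb', s, hst, hsb', hspos⟩ := ih (t.filter (fun m => m ∉ b))
        (fun m hm => htx (Finset.coe_subset.mpr hsub hm)) (by omega) hcov'
      exact ⟨b', Finset.mem_insert_of_mem hb', s, hst.trans hsub, hsb', hspos⟩


/-- (Direction (1) ⟹ (2) of the main lemma.) If for all `α₀, …, α_k < ω₁` there is a
`1`-condition `q ≤₀ p` with `int(q) ⊆ c` almost disjoint from all tuples from
`X_{α₀} × ⋯ × X_{α_k}`, then the filter generated by `F_p ∪ F(𝒜) ∪ {c}` is proper. -/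
theorem main_lemma_forward (X : Ordinal → Set (Set ℕ))
    (hXne : ∀ α < omega1, (X α).Nonempty)
    (hXcl : ∀ α < omega1, ∃ C : Set (Set ℕ), CantorClosed C ∧
      X α = C ∩ {a : Set ℕ | a.Infinite})
    (A : Set (Set ℕ)) (hA : A = ⋃ α ∈ Set.Iio omega1, X α)
    (hMAD : IsMADFamily A)
    (p : ZeroCond) (c : Set ℕ)
    (H : ∀ (k : ℕ) (α : Fin (k + 1) → Ordinal), (∀ i, α i < omega1) →
      ∃ q : ZeroCond, IsOneCond A q ∧ q.Le0 p ∧ q.int ⊆ c ∧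
        ∀ a : Fin (k + 1) → Set ℕ, (∀ i, a i ∈ X (α i)) →
          (q.int ∩ ⋃ i, a i).Finite) :
    (Fp p ⊓ filterAD A ⊓ Filter.principal c).NeBot := by
  rw [← Filter.forall_mem_nonempty_iff_neBot]
  intro S hS
  rw [Filter.mem_inf_iff] at hS
  obtain ⟨U, hU, V, hV, rfl⟩ := hS
  rw [Filter.mem_inf_iff] at hU
  obtain ⟨F, hF, G, hG, rfl⟩ := hU
  rw [Fp, Filter.mem_inf_iff] at hF
  obtain ⟨F₁, hF₁, F₂, hF₂, rfl⟩ := hF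
  rw [Filter.mem_generate_iff] at hF₁
  obtain ⟨T₁, hT₁sub, hT₁fin, hT₁⟩ := hF₁
  rw [filterAD, Filter.mem_generate_iff] at hG
  obtain ⟨T₂, hT₂sub, hT₂fin, hT₂⟩ := hG
  rw [Filter.mem_principal] at hV
  have h0 : (0 : Ordinal) < omega1 := by
    rw [omega1, Cardinal.lt_ord]
    simpa using Cardinal.aleph_pos 1
  obtain ⟨q, hq1, hqle, hqint, -⟩ := H 0 (fun _ => 0) (fun _ => h0)
  have ha₀ : (⋂₀ T₂)ᶜ ∈ idealAD A := by
    have hsub2 : (⋂₀ T₂)ᶜ ⊆ ⋃ Y ∈ hT₂fin.toFinset, Yᶜ := by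
      intro z hz
      rw [Set.mem_compl_iff, Set.mem_sInter] at hz
      push_neg at hz
      obtain ⟨Y, hY, hzY⟩ := hz
      exact Set.mem_biUnion ((Set.Finite.mem_toFinset _).mpr hY) hzY
    exact ideal_subset A hsub2 (ideal_biUnion A _ _
      (fun Y hY => hT₂sub ((Set.Finite.mem_toFinset _).mp hY)))
  have hF₂fin : F₂ᶜ.Finite := Filter.mem_cofinite.mp hF₂
  have ha' : (⋂₀ T₂)ᶜ ∪ F₂ᶜ ∈ idealAD A := ideal_union A ha₀ (ideal_finite A hF₂fin)
  obtain ⟨n, hn⟩ := hq1 ((⋂₀ T₂)ᶜ ∪ F₂ᶜ) ha' (hT₁fin.toFinset.card + 2)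
  set t := (q.c n).s.filter (fun m => m ∉ (⋂₀ T₂)ᶜ ∪ F₂ᶜ) with htdef
  have hn' : hT₁fin.toFinset.card + 2 ≤ (q.c n).nor t := by
    rw [htdef]; convert hn using 3
  clear hn
  by_cases hcase : ∃ x ∈ t, x ∈ ⋂₀ T₁
  · obtain ⟨x, hxt, hxT₁⟩ := hcase
    have hxq := Finset.mem_filter.mp hxt
    have hx2 : x ∈ F₂ := by
      by_contra h
      exact hxq.2 (Set.mem_union_right _ h)
    have hxG : x ∈ G := by
      refine hT₂ ?_
      by_contra h
      exact hxq.2 (Set.mem_union_left _ h)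
    have hxV : x ∈ V := hV (hqint (Set.mem_iUnion.mpr ⟨n, hxq.1⟩))
    exact ⟨x, ⟨⟨hT₁ hxT₁, hx2⟩, hxG⟩, hxV⟩
  · exfalso
    push_neg at hcase
    set B := hT₁fin.toFinset.image compl with hBdef
    have hcov : (↑t : Set ℕ) ⊆ ⋃ b ∈ B, b := by
      intro x hx
      have hxt : x ∈ t := hx
      have hxn := hcase x hxt
      rw [Set.mem_sInter] at hxn
      push_neg at hxn
      obtain ⟨b, hbT, hxb⟩ := hxn
      exact Set.mem_biUnion
        (Finset.mem_image.mpr ⟨b, (Set.Finite.mem_toFinset _).mpr hbT, rfl⟩) hxb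
    have hcard : B.card + 1 ≤ (q.c n).nor t := by
      have hle := Finset.card_image_le (s := hT₁fin.toFinset) (f := compl)
      rw [← hBdef] at hle
      omega
    obtain ⟨b', hb'B, s, hst, hsb', hspos⟩ := cover_split _ _ (q.c n).isNorm B t
      (Finset.coe_subset.mpr (Finset.filter_subset _ _)) hcard hcov
    obtain ⟨b, hbT, rfl⟩ := Finset.mem_image.mp hb'B
    have hbCp : b ∈ Cp p := hT₁sub ((Set.Finite.mem_toFinset _).mp hbT)
    have hsub : s ⊆ (q.c n).s := hst.trans (Finset.filter_subset _ _)
    have hsAp : s ∈ Ap p := by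
      constructor
      · have := (q.c n).isNorm.one_lt_card s (Finset.coe_subset.mpr hsub) hspos
        exact Finset.card_pos.mp (by omega)
      · exact hqle.1.2.2.2 n s hsub hspos
    exact hbCp s hsAp hsb'
end

section
/- Let Y₀, …, Y_k and T be compact subsets of P(ω) and let b ⊆ ω. Suppose that for every (a₀, …, a_k) ∈ Y₀ × ⋯ × Y_k and every c ∈ T, the set b ∩ c ∩ (ω \ a₀) ∩ ⋯ ∩ (ω \ a_k) is infinite. Then for every l ∈ ω there is a finite set s ⊆ b \ l such that for every (a₀, …, a_k) ∈ Y₀ × ⋯ × Y_k and every c ∈ T, s ∩ c ∩ (ω \ a₀) ∩ ⋯ ∩ (ω \ a_k) ≠ ∅. -/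
open scoped Classical

/- In the compact space `∏ᵢ chi '' Yᵢ × chi '' T` the point coming from `(a, c)` lies in
the clopen set "`m ∈ c` and `m ∉ aᵢ` for all `i`" for infinitely many `m ∈ b`, in particular for some
`m ≥ l`. Finitely many of these clopen sets cover, and their indices form `s`. -/

theorem chi_eq_true_iff {a : Set ℕ} {n : ℕ} : chi a n = true ↔ n ∈ a := by
  simp [chi]

theorem chi_eq_false_iff {a : Set ℕ} {n : ℕ} : chi a n = false ↔ n ∉ a := by
  simp [chi]

section Witness

variable {ι : Type*}

/-- Points `(f, g)` of `(2^ω)^ι × 2^ω` with `g m = 1` and `f i m = 0` for all `i`. -/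
def witnessSet (m : ℕ) : Set ((ι → ℕ → Bool) × (ℕ → Bool)) :=
  (fun p => (p.2 m, fun i => p.1 i m)) ⁻¹' {(true, fun _ => false)}

theorem isOpen_witnessSet [Finite ι] (m : ℕ) : IsOpen (witnessSet (ι := ι) m) :=
  (isOpen_discrete _).preimage (by fun_prop)

theorem chi_mem_witnessSet_iff {a : ι → Set ℕ} {c : Set ℕ} {m : ℕ} :
    (fun i => chi (a i), chi c) ∈ witnessSet m ↔ m ∈ c ∩ ⋂ i, (a i)ᶜ := by
  simp [witnessSet, funext_iff, chi_eq_true_iff, chi_eq_false_iff]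

theorem mem_pi_prod_image_chi {Y : ι → Set (Set ℕ)} {T : Set (Set ℕ)}
    {p : (ι → ℕ → Bool) × (ℕ → Bool)} :
    p ∈ (Set.univ.pi fun i => chi '' Y i) ×ˢ (chi '' T) ↔
      ∃ a : ι → Set ℕ, (∀ i, a i ∈ Y i) ∧ ∃ c ∈ T, p = (fun i => chi (a i), chi c) := by
  obtain ⟨f, g⟩ := p
  simp only [Set.mem_prod, Set.mem_univ_pi, Set.mem_image, Classical.skolem, Prod.mk.injEq]
  constructor
  · rintro ⟨⟨a, ha⟩, c, hc, rfl⟩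
    exact ⟨a, fun i => (ha i).1, c, hc, funext fun i => (ha i).2.symm, rfl⟩
  · rintro ⟨a, ha, c, hc, rfl, rfl⟩
    exact ⟨⟨a, fun i => ⟨ha i, rfl⟩⟩, c, hc, rfl⟩

end Witness

/-- A compactness argument: if every selection from the compact sets `Y i` and `T`
leaves `b ∩ c ∩ ⋂ᵢ (a i)ᶜ` infinite, then for each `l` a single finite `s ⊆ b \ l`
meets all such intersections. -/
theorem compactness_selection (k : ℕ) (Y : Fin (k + 1) → Set (Set ℕ)) (T : Set (Set ℕ))
    (hY : ∀ i, CantorCompact (Y i)) (hT : CantorCompact T) (b : Set ℕ)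
    (hinf : ∀ a : Fin (k + 1) → Set ℕ, (∀ i, a i ∈ Y i) → ∀ c ∈ T,
      (b ∩ c ∩ ⋂ i, (a i)ᶜ).Infinite) :
    ∀ l : ℕ, ∃ s : Finset ℕ, (↑s : Set ℕ) ⊆ b ∧ (∀ m ∈ s, l ≤ m) ∧
      ∀ a : Fin (k + 1) → Set ℕ, (∀ i, a i ∈ Y i) → ∀ c ∈ T,
        ((↑s : Set ℕ) ∩ c ∩ ⋂ i, (a i)ᶜ).Nonempty := by
  intro l
  set K := (Set.univ.pi fun i => chi '' Y i) ×ˢ (chi '' T)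
  have hK : IsCompact K := (isCompact_univ_pi hY).prod hT
  have hcover : K ⊆ ⋃ m ∈ {m | m ∈ b ∧ l ≤ m}, witnessSet m := by
    intro p hp
    obtain ⟨a, ha, c, hc, rfl⟩ := mem_pi_prod_image_chi.1 hp
    obtain ⟨m, ⟨⟨hmb, hmc⟩, hma⟩, hlm⟩ := (hinf a ha c hc).exists_gt l
    exact Set.mem_biUnion ⟨hmb, hlm.le⟩ (chi_mem_witnessSet_iff.2 ⟨hmc, hma⟩)
  obtain ⟨s, hsb, hs, hKs⟩ :=
    hK.elim_finite_subcover_image (fun m _ => isOpen_witnessSet m) hcover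
  refine ⟨hs.toFinset, fun m hm => (hsb (hs.mem_toFinset.1 hm)).1,
    fun m hm => (hsb (hs.mem_toFinset.1 hm)).2, fun a ha c hc => ?_⟩
  obtain ⟨m, hm, hmW⟩ := Set.mem_iUnion₂.1 (hKs (mem_pi_prod_image_chi.2 ⟨a, ha, c, hc, rfl⟩))
  obtain ⟨hmc, hma⟩ := chi_mem_witnessSet_iff.1 hmW
  exact ⟨m, ⟨hs.mem_toFinset.2 hm, hmc⟩, hma⟩
end

section
/- Let F be a proper F_σ filter on ω. Then there is a nonempty closed set C ⊆ P(ω) such that C ⊆ F and for every b ∈ F there exists c ∈ C with c ⊆* b. -/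
open scoped Classical

/-!
Write `F = ⋃ₙ Tₙ` with `Tₙ` closed, hence compact in Cantor space. Filling in `[0, n)` gives
`Cₙ = {b ∪ [0, n) | b ∈ Tₙ}`, still a compact subset of `F`, and every `b ∈ Tₙ` is `⊆*`-above
`b ∪ [0, n) ∈ Cₙ`. The sets `Cₙ` accumulate only at `ω`: a set missing `m` lies in no `Cₙ` with
`n > m`, so near such a set the union is locally a finite union of closed sets. Hence
`C = {ω} ∪ ⋃ₙ Cₙ` is closed.
-/

open Set Filter Topology

theorem isClosed_insert_iUnion_of_locallyFinite_off {X ι : Type*} [TopologicalSpace X]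
    [T1Space X] {A : ι → Set X} {p : X} (hA : ∀ i, IsClosed (A i))
    (hfin : ∀ x ≠ p, ∃ U ∈ 𝓝 x, {i | (A i ∩ U).Nonempty}.Finite) :
    IsClosed (insert p (⋃ i, A i)) := by
  refine isClosed_of_closure_subset fun x hx => ?_
  rcases eq_or_ne x p with rfl | hxp
  · exact mem_insert _ _
  obtain ⟨U, hU, hS⟩ := hfin x hxp
  set S := {i | (A i ∩ U).Nonempty}
  have hclosed : IsClosed (⋃ i ∈ S, A i) := hS.isClosed_biUnion fun i _ => hA i
  refine mem_insert_of_mem _ (iUnion₂_subset_iUnion (· ∈ S) A ?_)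
  by_contra hxS
  have hV : U ∩ (⋃ i ∈ S, A i)ᶜ ∩ {p}ᶜ ∈ 𝓝 x :=
    inter_mem (inter_mem hU (hclosed.isOpen_compl.mem_nhds hxS))
      (isOpen_compl_singleton.mem_nhds hxp)
  obtain ⟨y, ⟨⟨hyU, hyS⟩, hyp⟩, hy⟩ := mem_closure_iff_nhds.mp hx _ hV
  obtain ⟨i, hyi⟩ := mem_iUnion.mp ((mem_insert_iff.mp hy).resolve_left hyp)
  exact hyS (mem_biUnion (show (A i ∩ U).Nonempty from ⟨y, hyi, hyU⟩) hyi)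

theorem isClosed_insert_top_iUnion_of_true_below {A : ℕ → Set (ℕ → Bool)}
    (hA : ∀ n, IsClosed (A n)) (htrue : ∀ n, ∀ x ∈ A n, ∀ k < n, x k = true) :
    IsClosed (insert ⊤ (⋃ n, A n)) := by
  refine isClosed_insert_iUnion_of_locallyFinite_off hA fun x hx => ?_
  obtain ⟨m, hm⟩ : ∃ m, x m = false := by
    by_contra! h
    exact hx (funext fun m => eq_true_of_ne_false (h m))
  refine ⟨(· m) ⁻¹' {false}, (isOpen_discrete {false}).preimage (continuous_apply m)
    |>.mem_nhds hm, (finite_Iic m).subset ?_⟩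
  rintro n ⟨y, hyA, hym⟩
  by_contra hmn
  simp [htrue n y hyA m (not_le.mp hmn)] at hym

theorem chi_union (a b : Set ℕ) : chi (a ∪ b) = chi a ⊔ chi b := by
  funext k
  by_cases ha : k ∈ a <;> by_cases hb : k ∈ b <;> simp [chi, ha, hb]

theorem chi_univ : chi univ = ⊤ := by
  funext k
  simp [chi]

theorem continuous_pi_sup_const {ι α : Type*} [TopologicalSpace α] [DiscreteTopology α] [Max α]
    (c : ι → α) : Continuous (· ⊔ c : (ι → α) → ι → α) :=
  continuous_pi fun k =>
    (continuous_of_discreteTopology (f := (· ⊔ c k))).comp (continuous_apply k)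

theorem CantorClosed.isCompact {T : Set (Set ℕ)} (hT : CantorClosed T) : IsCompact (chi '' T) :=
  IsClosed.isCompact hT

theorem cantorClosed_insert_univ_iUnion_union_Iio {T : ℕ → Set (Set ℕ)}
    (hT : ∀ n, CantorClosed (T n)) :
    CantorClosed (insert univ (⋃ n, (· ∪ Iio n) '' T n)) := by
  have himage : ∀ n, chi '' ((· ∪ Iio n) '' T n) = (· ⊔ chi (Iio n)) '' (chi '' T n) := by
    intro n
    simp only [image_image, chi_union]
  rw [CantorClosed, image_insert_eq, chi_univ, image_iUnion]
  refine isClosed_insert_top_iUnion_of_true_below (fun n => ?_) ?_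
  · rw [himage]
    exact ((hT n).isCompact.image (continuous_pi_sup_const _)).isClosed
  · rintro n _ ⟨_, ⟨b, -, rfl⟩, rfl⟩ k hk
    simp [chi, hk]

theorem Fsigma_filter_closed_cofinal_general (F : Filter ℕ)
    (hFsigma : ∃ T : ℕ → Set (Set ℕ), (∀ n, CantorClosed (T n)) ∧ F.sets = ⋃ n, T n) :
    ∃ C : Set (Set ℕ), C.Nonempty ∧ CantorClosed C ∧ C ⊆ F.sets ∧
      ∀ b ∈ F, ∃ c ∈ C, (c \ b).Finite := by
  obtain ⟨T, hTc, hTF⟩ := hFsigma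
  have hT : ∀ n, T n ⊆ F.sets := fun n => hTF ▸ subset_iUnion T n
  refine ⟨insert univ (⋃ n, (· ∪ Iio n) '' T n), insert_nonempty _ _,
    cantorClosed_insert_univ_iUnion_union_Iio hTc, ?_, fun b hb => ?_⟩
  · rintro _ (rfl | hc)
    · exact univ_mem
    obtain ⟨n, b, hb, rfl⟩ := by simpa only [mem_iUnion, mem_image] using hc
    exact mem_of_superset (hT n hb) subset_union_left
  · obtain ⟨n, hn⟩ := mem_iUnion.mp (hTF ▸ hb : b ∈ ⋃ n, T n)
    refine ⟨b ∪ Iio n, mem_insert_of_mem _ (mem_iUnion_of_mem n ⟨b, hn, rfl⟩), ?_⟩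
    rw [union_sdiff_left]
    exact (finite_Iio n).subset sdiff_subset

/-- Every proper `F_σ` filter on `ω` contains a nonempty closed set `C` which is
`⊆*`-cofinal in the filter. -/
theorem Fsigma_filter_closed_cofinal (F : Filter ℕ)
    (hfrechet : Filter.cofinite ≤ F) (hproper : ∅ ∉ F)
    (hFsigma : ∃ T : ℕ → Set (Set ℕ), (∀ n, CantorClosed (T n)) ∧ F.sets = ⋃ n, T n) :
    ∃ C : Set (Set ℕ), C.Nonempty ∧ CantorClosed C ∧ C ⊆ F.sets ∧
      ∀ b ∈ F, ∃ c ∈ C, (c \ b).Finite :=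
  Fsigma_filter_closed_cofinal_general F hFsigma
end

section
/- Suppose there is a dominating family ⟨f_α : α < ω₁⟩ in ω^ω (i.e. 𝔡 = ℵ₁). Then there exists a tail-splitting sequence of partitions of length ω₁: a family ⟨a_{α,n} : α < ω₁, n ∈ ω⟩ of subsets of ω such that for each α the sets a_{α,n} (n ∈ ω) are pairwise disjoint, and for every infinite b ⊆ ω there is α < ω₁ such that a_{β,n} splits b for all β ≥ α and all n ∈ ω. -/
/-- `x` splits `b` iff both `x ∩ b` and `b \ x` are infinite. -/
def Splits (x b : Set ℕ) : Prop := (x ∩ b).Infinite ∧ (b \ x).Infinite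

/-- `S` is a club (closed unbounded) subset of the ordinal `o`. -/
def IsClubIn (o : Ordinal) (S : Set Ordinal) : Prop :=
  S ⊆ Set.Iio o ∧
  (∀ α < o, ∃ β ∈ S, α ≤ β) ∧
  (∀ α < o, α ≠ 0 → (∀ β < α, ∃ γ ∈ S, β < γ ∧ γ < α) → α ∈ S)

/-- A tail-splitting sequence of length `κ`. -/
def TailSplittingSeq (κ : Cardinal) (a : Ordinal → Set ℕ) : Prop :=
  (∀ α < κ.ord, (a α).Infinite) ∧
  ∀ b : Set ℕ, b.Infinite →
    ∃ α < κ.ord, ∀ β : Ordinal, α ≤ β → β < κ.ord → Splits (a β) b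

/-- A club-splitting sequence of length `κ`. -/
def ClubSplittingSeq (κ : Cardinal) (a : Ordinal → Set ℕ) : Prop :=
  (∀ α < κ.ord, (a α).Infinite) ∧
  ∀ b : Set ℕ, b.Infinite →
    ∃ S : Set Ordinal, IsClubIn κ.ord S ∧ ∀ α ∈ S, Splits (a α) b

namespace TSaux

/-- fast-growing iterate built from `h` -/
def FF (h : ℕ → ℕ) : ℕ → ℕ
  | 0 => 0
  | k+1 => max (h (FF h k)) (FF h k) + 1

lemma FF_lt_succ (h : ℕ → ℕ) (k : ℕ) : FF h k < FF h (k+1) := by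
  simp [FF]

lemma FF_strictMono (h : ℕ → ℕ) : StrictMono (FF h) :=
  strictMono_nat_of_lt_succ (FF_lt_succ h)

lemma le_FF (h : ℕ → ℕ) (k : ℕ) : k ≤ FF h k := by
  induction k with
  | zero => simp [FF]
  | succ n ih => have := FF_lt_succ h n; omega

lemma h_lt_FF_succ (h : ℕ → ℕ) (k : ℕ) : h (FF h k) < FF h (k+1) := by
  simp [FF]

/-- index of the interval containing m -/
noncomputable def idx (h : ℕ → ℕ) (m : ℕ) : ℕ :=
  Nat.findGreatest (fun k => FF h k ≤ m) m

lemma idx_eq (h : ℕ → ℕ) {k t : ℕ} (h1 : FF h k ≤ t) (h2 : t < FF h (k+1)) :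
    idx h t = k := by
  have hk : k ≤ idx h t :=
    Nat.le_findGreatest (le_trans (le_FF h k) h1) h1
  have hle : idx h t ≤ k := by
    by_contra hc
    push_neg at hc
    have h3 : FF h (idx h t) ≤ t := by
      apply Nat.findGreatest_spec (P := fun k => FF h k ≤ t) (m := 0)
      · exact Nat.zero_le _
      · simp [FF]
    have : FF h (k+1) ≤ FF h (idx h t) := (FF_strictMono h).monotone hc
    omega
  omega

/-- the n-th piece of the partition determined by h -/
noncomputable def aSet (h : ℕ → ℕ) (n : ℕ) : Set ℕ :=
  {m | (Nat.unpair (idx h m)).1 = n}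

lemma aSet_disjoint (h : ℕ → ℕ) {n m : ℕ} (hnm : n ≠ m) :
    Disjoint (aSet h n) (aSet h m) := by
  rw [Set.disjoint_left]
  intro x hx hx'
  exact hnm (hx.symm.trans hx')

/-- the "next element of b" function -/
noncomputable def nextb (b : Set ℕ) (m : ℕ) : ℕ := sInf {x | x ∈ b ∧ m < x}

lemma nextb_spec {b : Set ℕ} (hb : b.Infinite) (m : ℕ) :
    nextb b m ∈ b ∧ m < nextb b m := by
  have : {x | x ∈ b ∧ m < x}.Nonempty := by
    obtain ⟨x, hx, hx'⟩ := hb.exists_gt m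
    exact ⟨x, hx, hx'⟩
  exact Nat.sInf_mem this

/-- main combinatorial lemma: if h eventually dominates nextb b, every piece splits b -/
lemma splits_of_dom {h : ℕ → ℕ} {b : Set ℕ} (hb : b.Infinite)
    (hd : {m : ℕ | h m < nextb b m}.Finite) (n : ℕ) : Splits (aSet h n) b := by
  obtain ⟨N, hN⟩ := hd.bddAbove
  -- key claim: for any color c and any bound M, there is t ∈ b, t > M, with color t = c
  have key : ∀ c M : ℕ, ∃ t ∈ b, M < t ∧ (Nat.unpair (idx h t)).1 = c := by
    intro c M
    set j := max M N + 1 with hj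
    set k := Nat.pair c j with hk
    have hjk : j ≤ k := Nat.right_le_pair c j
    have hFFk : j ≤ FF h k := le_trans hjk (le_FF h k)
    obtain ⟨htb, htgt⟩ := nextb_spec hb (FF h k)
    set t := nextb b (FF h k) with ht
    have hnot : FF h k ∉ {m : ℕ | h m < nextb b m} := by
      intro hmem
      have := hN hmem
      omega
    simp only [Set.mem_setOf_eq, not_lt] at hnot
    have h2 : t < FF h (k+1) := lt_of_le_of_lt hnot (h_lt_FF_succ h k)
    have hidx : idx h t = k := idx_eq h (le_of_lt htgt) h2
    refine ⟨t, htb, by omega, ?_⟩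
    rw [hidx, hk, Nat.unpair_pair]
  constructor
  · apply Set.infinite_of_not_bddAbove
    rintro ⟨M, hM⟩
    obtain ⟨t, htb, htM, htc⟩ := key n M
    have : t ≤ M := hM ⟨htc, htb⟩
    omega
  · apply Set.infinite_of_not_bddAbove
    rintro ⟨M, hM⟩
    obtain ⟨t, htb, htM, htc⟩ := key (n+1) M
    have : t ≤ M := hM ⟨htb, by simp [aSet]; omega⟩
    omega

lemma countable_Iic {β : Ordinal} (hβ : β < omega1) : (Set.Iic β).Countable := by
  rw [← Set.countable_coe_iff, ← Cardinal.mk_le_aleph0_iff]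
  have : Set.Iic β = Set.Iio (Order.succ β) := (Order.Iio_succ β).symm
  rw [this, Ordinal.mk_Iio_ordinal]
  have h1 : β.card < Cardinal.aleph 1 := Cardinal.lt_ord.mp hβ
  have ha : Cardinal.aleph 1 = Order.succ Cardinal.aleph0 := by
    rw [← Cardinal.aleph_zero, ← Cardinal.aleph_succ, Ordinal.succ_zero]
  have h2 : β.card ≤ Cardinal.aleph0 := by
    rw [ha, Order.lt_succ_iff] at h1
    exact h1
  have h3 : (Order.succ β).card ≤ Cardinal.aleph0 := by
    rw [Ordinal.card_succ]
    exact (Cardinal.add_le_aleph0.mpr ⟨h2, Cardinal.one_le_aleph0⟩ : _)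
  calc Cardinal.lift (Order.succ β).card ≤ Cardinal.lift Cardinal.aleph0 :=
        Cardinal.lift_le.mpr h3
    _ = Cardinal.aleph0 := Cardinal.lift_aleph0

/-- diagonalization over a countable initial segment -/
lemma exists_diag (f : Ordinal → ℕ → ℕ) {β : Ordinal} (hβ : β < omega1) :
    ∃ h : ℕ → ℕ, ∀ γ ≤ β, {n : ℕ | h n < f γ n}.Finite := by
  obtain ⟨e, he⟩ := (countable_Iic hβ).exists_eq_range ⟨β, le_refl β⟩
  refine ⟨fun n => Finset.sup (Finset.range (n+1)) (fun i => f (e i) n), ?_⟩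
  intro γ hγ
  have : γ ∈ Set.Iic β := hγ
  rw [he] at this
  obtain ⟨i, hi⟩ := this
  apply Set.Finite.subset (Set.finite_Iio i)
  intro n hn
  simp only [Set.mem_setOf_eq] at hn
  by_contra hni
  simp only [Set.mem_Iio, not_lt] at hni
  have hle : f (e i) n ≤ Finset.sup (Finset.range (n+1)) (fun i => f (e i) n) :=
    Finset.le_sup (f := fun i => f (e i) n) (Finset.mem_range.mpr (by omega))
  rw [hi] at hle
  omega

end TSaux

namespace TSaux

lemma lift_omega1 : Ordinal.lift.{v, u} omega1.{u} = omega1.{max u v} := by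
  unfold omega1
  rw [Cardinal.lift_ord, Cardinal.lift_aleph, Ordinal.lift_one]

universe u v

/-- transfer an ordinal below omega1 from universe u to universe v -/
noncomputable def down (γ : Ordinal.{v}) : Ordinal.{u} :=
  if h : Ordinal.lift.{u} γ < Ordinal.lift.{v} omega1.{u} then
    (Ordinal.lt_lift_iff.mp h).choose else 0

lemma down_spec {γ : Ordinal.{v}} (hγ : γ < omega1.{v}) :
    down.{u} γ < omega1.{u} ∧ Ordinal.lift.{v} (down.{u} γ) = Ordinal.lift.{u} γ := by
  have h : Ordinal.lift.{u} γ < Ordinal.lift.{v} omega1.{u} := by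
    rw [lift_omega1]
    calc Ordinal.lift.{u} γ < Ordinal.lift.{u} omega1.{v} := Ordinal.lift_lt.mpr hγ
      _ = omega1.{max u v} := lift_omega1
  rw [down, dif_pos h]
  obtain ⟨h1, h2⟩ := (Ordinal.lt_lift_iff.mp h).choose_spec
  exact ⟨h1, h2⟩

end TSaux

theorem aux_main.{u, v} (f : Ordinal.{u} → ℕ → ℕ)
    (hdom : ∀ g : ℕ → ℕ, ∃ α < omega1.{u}, {n : ℕ | f α n < g n}.Finite) :
    ∃ a : Ordinal.{v} → ℕ → Set ℕ,
      (∀ α < omega1.{v}, ∀ n m : ℕ, n ≠ m → Disjoint (a α n) (a α m)) ∧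
      ∀ b : Set ℕ, b.Infinite → ∃ α < omega1.{v}, ∀ β : Ordinal.{v}, α ≤ β → β < omega1.{v} →
        ∀ n : ℕ, Splits (a β n) b := by
  classical
  have H : ∀ β : Ordinal.{v}, ∃ h : ℕ → ℕ,
      β < omega1.{v} → ∀ γ ≤ TSaux.down.{u} β, {n : ℕ | h n < f γ n}.Finite := by
    intro β
    by_cases hβ : β < omega1.{v}
    · obtain ⟨h, hspec⟩ := TSaux.exists_diag f (TSaux.down_spec hβ).1
      exact ⟨h, fun _ => hspec⟩
    · exact ⟨id, fun h => absurd h hβ⟩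
  choose hh hhspec using H
  refine ⟨fun β n => TSaux.aSet (hh β) n, ?_, ?_⟩
  · intro α hα n m hnm
    exact TSaux.aSet_disjoint _ hnm
  · intro b hb
    obtain ⟨α, hα, hfin⟩ := hdom (TSaux.nextb b)
    -- lift α up to universe v
    have hup : Ordinal.lift.{v} α < Ordinal.lift.{u} omega1.{v} := by
      rw [TSaux.lift_omega1]
      calc Ordinal.lift.{v} α < Ordinal.lift.{v} omega1.{u} := Ordinal.lift_lt.mpr hα
        _ = omega1.{max u v} := TSaux.lift_omega1
    obtain ⟨α', hα', hα'eq⟩ := Ordinal.lt_lift_iff.mp hup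
    refine ⟨α', hα', ?_⟩
    intro β hαβ hβ n
    refine TSaux.splits_of_dom hb ?_ n
    have hdown : α ≤ TSaux.down.{u} β := by
      obtain ⟨hd1, hd2⟩ := TSaux.down_spec.{u} hβ
      rw [← Ordinal.lift_le.{v}]
      calc Ordinal.lift.{v} α = Ordinal.lift.{u} α' := hα'eq.symm
        _ ≤ Ordinal.lift.{u} β := Ordinal.lift_le.mpr hαβ
        _ = Ordinal.lift.{v} (TSaux.down.{u} β) := hd2.symm
    have h1 := hhspec β hβ α hdown
    apply Set.Finite.subset (h1.union hfin)
    intro m hm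
    simp only [Set.mem_setOf_eq] at hm
    simp only [Set.mem_union, Set.mem_setOf_eq]
    rcases lt_or_ge (hh β m) (f α m) with h | h
    · exact Or.inl h
    · exact Or.inr (lt_of_le_of_lt h hm)

/-- If there is a dominating family `⟨f_α : α < ω₁⟩` (i.e. `𝔡 = ℵ₁`), then there is a
tail-splitting sequence of partitions of length `ω₁`. -/
theorem dominating_tailSplitting_partitions (f : Ordinal → ℕ → ℕ)
    (hdom : ∀ g : ℕ → ℕ, ∃ α < omega1, {n : ℕ | f α n < g n}.Finite) :
    ∃ a : Ordinal → ℕ → Set ℕ,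
      (∀ α < omega1, ∀ n m : ℕ, n ≠ m → Disjoint (a α n) (a α m)) ∧
      ∀ b : Set ℕ, b.Infinite → ∃ α < omega1, ∀ β : Ordinal, α ≤ β → β < omega1 →
        ∀ n : ℕ, Splits (a β n) b := aux_main f hdom
end

section
/- Suppose 𝔰 > ℵ₁, i.e. there is no splitting family of size at most ℵ₁. Then the strong polarized partition relation (ω₁, ω) → (ω₁, ω)^{1,1}_2 holds: for every c : ω₁ × ω → 2 there are A ⊆ ω₁ with |A| = ℵ₁ and an infinite B ⊆ ω such that c is constant on A × B. -/
/-- The strong polarized partition relation `(λ, ω) → (λ, ω)^{1,1}_2`. -/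
def StrongPolarized (lam : Cardinal.{0}) : Prop :=
  ∀ c : Ordinal.{0} → ℕ → Fin 2,
    ∃ (A : Set Ordinal.{0}) (B : Set ℕ) (i : Fin 2),
      A ⊆ Set.Iio lam.ord ∧ Cardinal.mk A = Cardinal.lift.{1} lam ∧ B.Infinite ∧
      ∀ α ∈ A, ∀ n ∈ B, c α n = i

/-!
The rows `{n | c α n = 1}`, `α < ω₁`, form a family of at most `ℵ₁` sets, so by `𝔰 > ℵ₁` some
infinite `b` is split by none of them: on `b` each row `c α` is constant, with colour `iₐ`, off a
finite set `Eₐ`. There are only countably many pairs `(iₐ, Eₐ)`, so uncountably many `α` share one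
pair `(i, E)`, and `c` is constantly `i` on those `α` times `b \ E`.
-/

open Cardinal Set

theorem Set.exists_not_countable_inter_preimage_singleton {α β : Type*} [Countable β]
    {s : Set α} (hs : ¬ s.Countable) (f : α → β) :
    ∃ b, ¬ (s ∩ f ⁻¹' {b}).Countable := by
  by_contra! h
  refine hs ?_
  simpa [← inter_iUnion, ← preimage_iUnion, iUnion_of_singleton] using countable_iUnion h

theorem Cardinal.mk_range_le_of_Iio_ord {κ : Cardinal.{u}} {β : Type u} (f : Iio κ.ord → β) :
    #(range f) ≤ κ := by
  simpa [mk_Iio_ordinal] using mk_range_le_lift (f := f)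

theorem Cardinal.not_countable_Iio_ord_aleph_one : ¬ (Iio (ℵ₁ : Cardinal.{u}).ord).Countable := by
  rw [← le_aleph0_iff_set_countable, mk_Iio_ordinal, card_ord]
  simp

theorem Cardinal.mk_eq_lift_aleph_one_of_subset_Iio {A : Set Ordinal.{u}}
    (hA : A ⊆ Iio (ℵ₁ : Cardinal.{u}).ord) (hA' : ¬ A.Countable) :
    #A = lift.{u + 1} (ℵ₁ : Cardinal.{u}) := by
  refine le_antisymm ?_ ?_
  · simpa [mk_Iio_ordinal] using mk_le_mk_of_subset hA
  · rw [← le_aleph0_iff_set_countable, not_le, ← aleph_one_le_iff] at hA'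
    simpa using hA'

theorem exists_finset_forall_eq_of_not_splits {f : ℕ → Fin 2} {b : Set ℕ}
    (h : ¬ Splits {n | f n = 1} b) : ∃ (i : Fin 2) (E : Finset ℕ), ∀ n ∈ b \ E, f n = i := by
  rw [Splits, not_and_or, not_infinite, not_infinite] at h
  rcases h with h | h
  · refine ⟨0, h.toFinset, fun n ⟨hb, hE⟩ => ?_⟩
    have : f n ≠ 1 := fun h1 => hE (h.mem_toFinset.2 ⟨h1, hb⟩)
    omega
  · exact ⟨1, h.toFinset, fun n ⟨hb, hE⟩ => by_contra fun h1 => hE (h.mem_toFinset.2 ⟨hb, h1⟩)⟩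

/-- If there is no splitting family of size at most `ℵ₁` (i.e. `𝔰 > ℵ₁`), then
`(ω₁, ω) → (ω₁, ω)^{1,1}_2` holds. -/
theorem s_gt_aleph1_polarized
    (h : ∀ F : Set (Set ℕ), Cardinal.mk F ≤ Cardinal.aleph 1 →
      ¬ ∀ b : Set ℕ, b.Infinite → ∃ x ∈ F, Splits x b) :
    StrongPolarized (Cardinal.aleph 1) := by
  intro c
  set ω₁ := (ℵ₁ : Cardinal.{0}).ord
  have hsplit := h (range fun α : Iio ω₁ => {n | c α n = 1}) (mk_range_le_of_Iio_ord _)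
  push Not at hsplit
  obtain ⟨b, hb, hunsplit⟩ := hsplit
  have hrow : ∀ α ∈ Iio ω₁, ∃ p : Fin 2 × Finset ℕ, ∀ n ∈ b \ p.2, c α n = p.1 := by
    intro α hα
    obtain ⟨i, E, hE⟩ := exists_finset_forall_eq_of_not_splits (hunsplit _ ⟨⟨α, hα⟩, rfl⟩)
    exact ⟨(i, E), hE⟩
  choose! p hp using hrow
  obtain ⟨q, hq⟩ := exists_not_countable_inter_preimage_singleton not_countable_Iio_ord_aleph_one p
  refine ⟨Iio ω₁ ∩ p ⁻¹' {q}, b \ q.2, q.1, inter_subset_left,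
    mk_eq_lift_aleph_one_of_subset_Iio inter_subset_left hq, hb.sdiff q.2.finite_toSet, ?_⟩
  rintro α ⟨hα, rfl⟩ n hn
  exact hp α hα n hn
end

section
/- Assume the Continuum Hypothesis (2^{ℵ₀} = ℵ₁). Let Ā = ⟨a_α : α < ω₁⟩ be a club-splitting sequence and let B̄ = ⟨b_α : α < ω₁⟩ be a tail-splitting sequence. Then there exist infinite sets c_α ⊆ ω (α < ω₁), ⊆*-decreasing in α, and ordinals ζ_α ≥ α with c_α ⊆ b_{ζ_α}, such that the filter H on ω generated by {c_α : α < ω₁} together with the cofinite sets is a proper P-filter and (⋆)_{Ā,H} holds: for every partial function f : ω → ω whose domain is H-positive and such that f⁻¹({n}) belongs to the dual ideal H* for every n, the set D_f = {α < ω₁ : both f⁻¹(a_α) and f⁻¹(ω \ a_α) are H-positive} contains a closed unbounded subset of ω₁. -/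
/-!
Under CH the pairs `(dom, f)` can be listed as `⟨F γ : γ < ω₁⟩`. The tower `c` is built by
recursion: `c α` is a pseudo-intersection of the earlier `c ξ` which keeps positive every set
`{m ∈ dom | f m ∈ a δ}` or `{m ∈ dom | f m ∉ a δ}` with `(dom, f) = F γ`, `γ, δ ≤ α`, that was
positive for all earlier `c ξ`, cut down by one `b ζ`, `ζ ≥ α`, splitting all these countably
many sets at once. Given `(dom, f) = F γ₀` as in `(⋆)`, the fibres of `f` are null, so
`f[c ξ ∩ dom]` is infinite and `a α` splits it for club many `α`. On the diagonal intersection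
of these clubs above `γ₀`, both `f⁻¹(a α)` and `f⁻¹(ω \ a α)` meet `c ξ` infinitely: for `ξ < α`
by splitting, and for `ξ ≥ α` because stage `ξ` preserves positivity.
-/

universe u v

open Cardinal Ordinal Set

lemma omega1_eq_omega_one : omega1 = ω₁ := ord_aleph 1

lemma countable_Iio_of_lt_omega_one {α : Ordinal} (h : α < ω₁) : (Iio α).Countable := by
  rw [← le_aleph0_iff_set_countable, Cardinal.mk_Iio_ordinal, lift_le_aleph0, ← lt_aleph_one_iff,
    ← lt_ord, ord_aleph]
  exact h

lemma countable_Iic_of_lt_omega_one {α : Ordinal} (h : α < ω₁) : (Iic α).Countable := by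
  rw [← Iio_add_one_eq_Iic]
  exact countable_Iio_of_lt_omega_one ((isSuccLimit_omega 1).add_one_lt h)

lemma exists_closure_point_lt_omega_one (g : Ordinal.{u} → Ordinal.{u}) (hg : ∀ t < ω₁, g t < ω₁)
    {α₀ : Ordinal} (hα₀ : α₀ < ω₁) : ∃ A < ω₁, α₀ < A ∧ ∀ β < A, g β < A := by
  obtain ⟨u, hu_zero, hu_succ⟩ : ∃ u : ℕ → Ordinal.{u}, u 0 = α₀ ∧
      ∀ n, u (n + 1) = max (⨆ β : Iic (u n), g β) (u n + 1) :=
    ⟨fun n => Nat.rec α₀ (fun _ t => max (⨆ β : Iic t, g β) (t + 1)) n, rfl, fun _ => rfl⟩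
  have hu_lt (n : ℕ) : u n < ω₁ := by
    induction n with
    | zero => exact hu_zero ▸ hα₀
    | succ n ih =>
      have := (countable_Iic_of_lt_omega_one ih).to_subtype
      rw [hu_succ]
      exact max_lt (Ordinal.iSup_lt_omega_one fun β => hg β (β.2.trans_lt ih))
        ((isSuccLimit_omega 1).add_one_lt ih)
  have hu_lt_succ (n : ℕ) : u n < u (n + 1) :=
    (Order.lt_add_one_iff.mpr le_rfl).trans_le (hu_succ n ▸ le_max_right _ _)
  have hu_lt_sup (n : ℕ) : u n < ⨆ k, u k :=
    (hu_lt_succ n).trans_le (Ordinal.le_iSup u (n + 1))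
  refine ⟨⨆ k, u k, Ordinal.iSup_lt_omega_one hu_lt, hu_zero ▸ hu_lt_sup 0, fun β hβ => ?_⟩
  obtain ⟨n, hn⟩ := Ordinal.lt_iSup_iff.mp hβ
  calc g β ≤ ⨆ γ : Iic (u n), g γ := Ordinal.le_iSup (ι := Iic (u n)) (fun γ => g γ) ⟨β, hn.le⟩
    _ ≤ u (n + 1) := hu_succ n ▸ le_max_left _ _
    _ < ⨆ k, u k := hu_lt_sup (n + 1)

lemma IsClubIn.inter_Ioi {o : Ordinal} (ho : Order.IsSuccLimit o) {S : Set Ordinal}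
    (hS : IsClubIn o S) {γ : Ordinal} (hγ : γ < o) : IsClubIn o (S ∩ Ioi γ) := by
  obtain ⟨hSo, hunb, hcl⟩ := hS
  refine ⟨inter_subset_left.trans hSo, fun α hα => ?_, fun α hα hα0 hcof => ?_⟩
  · obtain ⟨β, hβS, hβ⟩ := hunb (max α (γ + 1)) (max_lt hα (ho.add_one_lt hγ))
    exact ⟨β, ⟨hβS, Order.add_one_le_iff.mp ((le_max_right _ _).trans hβ)⟩,
      (le_max_left _ _).trans hβ⟩
  · obtain ⟨δ, ⟨-, hγδ⟩, -, hδα⟩ := hcof 0 (pos_iff_ne_zero.mpr hα0)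
    refine ⟨hcl α hα hα0 fun β hβ => ?_, hγδ.trans hδα⟩
    obtain ⟨δ', ⟨hδ'S, -⟩, h⟩ := hcof β hβ
    exact ⟨δ', hδ'S, h⟩

lemma isClubIn_diagonal {S : Ordinal.{u} → Set Ordinal.{u}}
    (hS : ∀ ξ < ω₁, IsClubIn ω₁ (S ξ)) : IsClubIn ω₁ {α | α < ω₁ ∧ ∀ ξ < α, α ∈ S ξ} := by
  have hnext (t ξ : Ordinal.{u}) : ∃ β, t < ω₁ → ξ < ω₁ → β ∈ S ξ ∧ t < β ∧ β < ω₁ := by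
    by_cases h : t < ω₁ ∧ ξ < ω₁
    · obtain ⟨β, hβS, hβ⟩ := (hS ξ h.2).2.1 (t + 1) ((isSuccLimit_omega 1).add_one_lt h.1)
      exact ⟨β, fun _ _ => ⟨hβS, Order.add_one_le_iff.mp hβ, (hS ξ h.2).1 hβS⟩⟩
    · exact ⟨0, fun ht hξ => absurd ⟨ht, hξ⟩ h⟩
  choose next hnext using hnext
  have hbound (t : Ordinal.{u}) (ht : t < ω₁) : ⨆ ξ : Iic t, next t ξ < ω₁ := by
    have := (countable_Iic_of_lt_omega_one ht).to_subtype
    exact Ordinal.iSup_lt_omega_one fun ξ => (hnext t ξ ht (ξ.2.trans_lt ht)).2.2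
  refine ⟨fun α hα => hα.1, fun α₀ hα₀ => ?_, fun α hα hα0 hcof => ⟨hα, fun ξ hξ => ?_⟩⟩
  · obtain ⟨A, hA, hα₀A, hclosed⟩ := exists_closure_point_lt_omega_one _ hbound hα₀
    refine ⟨A, ⟨hA, fun ξ hξ => (hS ξ (hξ.trans hA)).2.2 A hA hα₀A.ne_bot fun β hβ => ?_⟩,
      hα₀A.le⟩
    have ht : max β ξ < A := max_lt hβ hξ
    obtain ⟨hmem, hlt, -⟩ := hnext (max β ξ) ξ (ht.trans hA) (hξ.trans hA)
    refine ⟨_, hmem, (le_max_left _ _).trans_lt hlt, lt_of_le_of_lt ?_ (hclosed _ ht)⟩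
    exact Ordinal.le_iSup (ι := Iic (max β ξ)) (fun γ => next (max β ξ) γ)
      ⟨ξ, mem_Iic.mpr (le_max_right _ _)⟩
  · refine (hS ξ (hξ.trans hα)).2.2 α hα hα0 fun β hβ => ?_
    obtain ⟨γ, hγ, hβγ, hγα⟩ := hcof (max β ξ) (max_lt hβ hξ)
    exact ⟨γ, hγ.2 ξ ((le_max_right _ _).trans_lt hβγ), (le_max_left _ _).trans_lt hβγ, hγα⟩

noncomputable def Ordinal.iioOrderIsoOfLiftEq {o : Ordinal.{u}} {o' : Ordinal.{v}}
    (h : lift.{v} o = lift.{u} o') : Iio o ≃o Iio o' :=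
  OrderIso.ofRelIsoLT <| Classical.choice <| Ordinal.lift_type_eq.{u + 1, v + 1, 0}.mp <| by
    simpa [type_lt_Iio] using congrArg lift.{max (u + 1) (v + 1)} h

lemma IsClubIn.image_orderIso {o : Ordinal.{u}} {o' : Ordinal.{v}} (e : Iio o ≃o Iio o')
    {S : Set Ordinal.{u}} (hS : IsClubIn o S) :
    IsClubIn o' ((fun x => (e x : Ordinal)) '' ((↑) ⁻¹' S)) := by
  obtain ⟨hSo, hunb, hcl⟩ := hS
  refine ⟨?_, fun α hα => ?_, fun α hα hα0 hcof => ?_⟩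
  · rintro _ ⟨x, -, rfl⟩
    exact (e x).2
  · obtain ⟨β, hβS, hβ⟩ := hunb _ (e.symm ⟨α, hα⟩).2
    refine ⟨_, ⟨⟨β, hSo hβS⟩, hβS, rfl⟩, ?_⟩
    exact Subtype.mk_le_mk.mp (e.symm_apply_le.mp (Subtype.mk_le_mk.mpr hβ))
  · set x := e.symm ⟨α, hα⟩
    have hex : e x = ⟨α, hα⟩ := e.apply_symm_apply _
    have hx0 : (x : Ordinal) ≠ 0 := by
      intro h0
      have hpos : (0 : Ordinal) < o' := zero_le.trans_lt hα
      have := e.monotone (show x ≤ e.symm ⟨0, hpos⟩ by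
        rw [← Subtype.coe_le_coe, h0]; exact zero_le)
      rw [hex, e.apply_symm_apply] at this
      exact hα0 (nonpos_iff_eq_zero.mp (Subtype.mk_le_mk.mp this))
    refine ⟨x, hcl x x.2 hx0 fun β hβ => ?_, congrArg Subtype.val hex⟩
    let y : Iio o := ⟨β, hβ.trans x.2⟩
    have hyx : e y < e x := e.lt_iff_lt.mpr hβ
    rw [hex] at hyx
    obtain ⟨_, ⟨z, hzS, rfl⟩, hyz, hzx⟩ := hcof (e y) hyx
    refine ⟨z, hzS, e.lt_iff_lt.mp hyz, ?_⟩
    have : e z < e x := by rw [hex]; exact hzx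
    exact e.lt_iff_lt.mp this

lemma ClubSplittingSeq.comp_orderIso {a : Ordinal.{u} → Set ℕ} (ha : ClubSplittingSeq ℵ₁ a)
    (e : Iio (ω₁ : Ordinal.{v}) ≃o Iio (ω₁ : Ordinal.{u})) :
    ClubSplittingSeq ℵ₁ fun β => if h : β < ω₁ then a (e ⟨β, h⟩) else ∅ := by
  simp only [ClubSplittingSeq, ord_aleph] at ha ⊢
  refine ⟨fun β hβ => by simpa [dif_pos hβ] using ha.1 _ (e ⟨β, hβ⟩).2, fun x hx => ?_⟩
  obtain ⟨S, hS, hsplit⟩ := ha.2 x hx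
  refine ⟨_, hS.image_orderIso e.symm, ?_⟩
  rintro _ ⟨y, hyS, rfl⟩
  rw [dif_pos (show (e.symm y : Ordinal) < ω₁ from (e.symm y).2)]
  simpa using hsplit y hyS

lemma continuum_eq_aleph_one_lift (h : continuum.{u} = ℵ₁) : continuum.{v} = ℵ₁ := by
  apply Cardinal.lift_injective.{u}
  simpa using congrArg Cardinal.lift.{v} h

lemma mk_set_nat_prod_nat_fun : #(Set ℕ × (ℕ → ℕ)) = 𝔠 := by
  rw [mk_prod, Cardinal.lift_id, Cardinal.lift_id, mk_set_nat, mk_arrow, mk_nat, lift_aleph0,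
    aleph0_power_aleph0, continuum_mul_self]

lemma exists_surjOn_Iio_omega_one {α : Type v} [Nonempty α] (h : #α ≤ ℵ₁) :
    ∃ F : Ordinal.{u} → α, SurjOn F (Iio ω₁) univ := by
  classical
  have : Cardinal.lift.{u + 1} #α ≤ Cardinal.lift.{v} #(Iio (ω₁ : Ordinal.{u})) := by
    simpa [Cardinal.mk_Iio_ordinal] using h
  obtain ⟨ι⟩ := lift_mk_le'.mp this
  refine ⟨fun γ => if hγ : γ < ω₁ then Function.invFun ι ⟨γ, hγ⟩ else Classical.arbitrary α,
    fun p _ => ⟨ι p, (ι p).2, ?_⟩⟩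
  have hp : (ι p : Ordinal) < ω₁ := (ι p).2
  simp [hp, Function.leftInverse_invFun ι.injective p]

lemma Set.Finite.diff_trans {α : Type*} {s t u : Set α} (hst : (s \ t).Finite)
    (htu : (t \ u).Finite) : (s \ u).Finite :=
  (hst.union htu).subset (sdiff_triangle s t u)

lemma exists_pseudoIntersection_of_antitone {o : ℕ → Set ℕ} (hanti : Antitone o)
    (ho : ∀ n, (o n).Infinite) (X : ℕ → Set ℕ) :
    ∃ d : Set ℕ, d.Infinite ∧ (∀ n, (d \ o n).Finite) ∧
      ∀ j, (∀ n, (o n ∩ X j).Infinite) → (d ∩ X j).Infinite := by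
  classical
  -- the `k`-th point of `d` is spent on the set `X k.unpair.1`
  let T : ℕ → Set ℕ := fun k =>
    if ∀ n, (o n ∩ X k.unpair.1).Infinite then o k ∩ X k.unpair.1 else o k
  have hTo (k : ℕ) : T k ⊆ o k := by
    simp only [T]; split_ifs <;> simp
  have hT (k : ℕ) : (T k).Infinite := by
    simp only [T]; split_ifs with h
    exacts [h k, ho k]
  choose p hpT hpk using fun k => (hT k).exists_gt k
  refine ⟨range p, infinite_of_forall_exists_gt fun k => ⟨p k, mem_range_self k, hpk k⟩,
    fun n => ?_, fun j hj => ?_⟩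
  · refine ((finite_Iio n).image p).subset ?_
    rintro _ ⟨⟨k, rfl⟩, hk⟩
    exact ⟨k, lt_of_not_ge fun hnk => hk (hanti hnk (hTo k (hpT k))), rfl⟩
  · refine infinite_of_forall_exists_gt fun n =>
      ⟨p (Nat.pair j n), ⟨mem_range_self _, ?_⟩, (Nat.right_le_pair j n).trans_lt (hpk _)⟩
    have hp := hpT (Nat.pair j n)
    simp only [T, Nat.unpair_pair, if_pos hj] at hp
    exact hp.2

lemma exists_pseudoIntersection {o : ℕ → Set ℕ} (hdec : ∀ k n, k ≤ n → (o n \ o k).Finite)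
    (ho : ∀ n, (o n).Infinite) (X : ℕ → Set ℕ) :
    ∃ d : Set ℕ, d.Infinite ∧ (∀ n, (d \ o n).Finite) ∧
      ∀ j, (∀ n, (o n ∩ X j).Infinite) → (d ∩ X j).Infinite := by
  let o' : ℕ → Set ℕ := fun n => ⋂ k ∈ Iic n, o k
  have hanti : Antitone o' := fun m n hmn => biInter_subset_biInter_left (Iic_subset_Iic.mpr hmn)
  have hsub (n : ℕ) : o' n ⊆ o n := biInter_subset_of_mem (mem_Iic.mpr le_rfl)
  have hfin (n : ℕ) : (o n \ o' n).Finite := by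
    refine ((finite_Iic n).biUnion fun k hk => hdec k n hk).subset ?_
    rintro x ⟨hx, hx'⟩
    obtain ⟨k, hk, hxk⟩ : ∃ k ∈ Iic n, x ∉ o k := by simpa [o'] using hx'
    exact mem_biUnion hk ⟨hx, hxk⟩
  have hpos (n : ℕ) {Y : Set ℕ} (hY : (o n ∩ Y).Infinite) : (o' n ∩ Y).Infinite := by
    refine (hY.sdiff (hfin n)).mono ?_
    rintro x ⟨⟨hx, hxY⟩, hx'⟩
    exact ⟨by_contra fun h => hx' ⟨hx, h⟩, hxY⟩
  obtain ⟨d, hd, hdo', hdX⟩ := exists_pseudoIntersection_of_antitone hanti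
    (fun n => by simpa using hpos n (Y := univ) (by simpa using ho n)) X
  exact ⟨d, hd, fun n => (hdo' n).subset (sdiff_subset_sdiff_right (hsub n)),
    fun j hj => hdX j fun n => hpos n (hj n)⟩

lemma exists_pseudoIntersection_of_lt_omega_one {α : Ordinal.{u}} (hα : α < ω₁) (hα0 : α ≠ 0)
    {c : Ordinal.{u} → Set ℕ} (hc : ∀ ξ < α, (c ξ).Infinite)
    (hdec : ∀ η ξ, η ≤ ξ → ξ < α → (c ξ \ c η).Finite) {𝒳 : Set (Set ℕ)} (h𝒳 : 𝒳.Countable) :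
    ∃ d : Set ℕ, d.Infinite ∧ (∀ ξ < α, (d \ c ξ).Finite) ∧
      ∀ X ∈ 𝒳, (∀ ξ < α, (c ξ ∩ X).Infinite) → (d ∩ X).Infinite := by
  obtain ⟨g, hg⟩ := (countable_Iio_of_lt_omega_one hα).exists_eq_range
    ⟨0, pos_iff_ne_zero.mpr hα0⟩
  have hg_lt (n : ℕ) : g n < α := (hg ▸ mem_range_self n : g n ∈ Iio α)
  obtain ⟨X, hX⟩ := countable_iff_exists_subset_range.mp h𝒳
  let m : ℕ → Ordinal.{u} := fun n => (Finset.range (n + 1)).sup g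
  have hm_lt (n : ℕ) : m n < α :=
    (Finset.sup_lt_iff (pos_iff_ne_zero.mpr hα0)).mpr fun i _ => hg_lt i
  have hm_mono : Monotone m := fun k n hkn =>
    Finset.sup_mono (Finset.range_subset_range.mpr (by omega))
  obtain ⟨d, hd, hdc, hdX⟩ := exists_pseudoIntersection (o := fun n => c (m n))
    (fun k n hkn => hdec _ _ (hm_mono hkn) (hm_lt n)) (fun n => hc _ (hm_lt n)) X
  refine ⟨d, hd, fun ξ hξ => ?_, fun Y hY hpos => ?_⟩
  · obtain ⟨n, rfl⟩ : ξ ∈ range g := hg ▸ hξ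
    exact (hdc n).diff_trans
      (hdec _ _ (Finset.le_sup (Finset.self_mem_range_succ n)) (hm_lt n))
  · obtain ⟨j, rfl⟩ := hX hY
    exact hdX j fun n => hpos _ (hm_lt n)

lemma TailSplittingSeq.exists_splits_of_countable {b : Ordinal.{u} → Set ℕ}
    (hb : TailSplittingSeq ℵ₁ b) {𝒴 : Set (Set ℕ)} (h𝒴 : 𝒴.Countable)
    (hinf : ∀ Y ∈ 𝒴, Y.Infinite) {α : Ordinal.{u}} (hα : α < ω₁) :
    ∃ ζ, α ≤ ζ ∧ ζ < ω₁ ∧ ∀ Y ∈ 𝒴, Splits (b ζ) Y := by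
  have hb' (Y : 𝒴) : ∃ β < ω₁, ∀ γ, β ≤ γ → γ < ω₁ → Splits (b γ) Y := by
    simpa [ord_aleph] using hb.2 Y (hinf Y Y.2)
  choose β hβ hsplit using hb'
  have := h𝒴.to_subtype
  have hsup : ⨆ Y, β Y < ω₁ := Ordinal.iSup_lt_omega_one hβ
  refine ⟨max α (⨆ Y, β Y), le_max_left _ _, max_lt hα hsup, fun Y hY => ?_⟩
  exact hsplit ⟨Y, hY⟩ _ ((Ordinal.le_iSup β _).trans (le_max_right _ _)) (max_lt hα hsup)

structure IsStage (b : Ordinal.{u} → Set ℕ) (𝒳 : Set (Set ℕ)) (α : Ordinal.{u})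
    (c : Ordinal.{u} → Set ℕ) (d : Set ℕ) (ζ : Ordinal.{u}) : Prop where
  infinite : d.Infinite
  almost_subset : ∀ ξ < α, (d \ c ξ).Finite
  le_index : α ≤ ζ
  index_lt : ζ < ω₁
  subset : d ⊆ b ζ
  -- at `α = 0` positivity below `α` is vacuous, so nothing can be preserved
  preserves : 0 < α → ∀ X ∈ 𝒳, (∀ ξ < α, (c ξ ∩ X).Infinite) → (d ∩ X).Infinite

lemma IsStage.congr {b : Ordinal.{u} → Set ℕ} {𝒳 : Set (Set ℕ)} {α ζ : Ordinal.{u}}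
    {c c' : Ordinal.{u} → Set ℕ} {d : Set ℕ} (h : ∀ ξ < α, c ξ = c' ξ)
    (hs : IsStage b 𝒳 α c d ζ) : IsStage b 𝒳 α c' d ζ where
  infinite := hs.infinite
  almost_subset ξ hξ := h ξ hξ ▸ hs.almost_subset ξ hξ
  le_index := hs.le_index
  index_lt := hs.index_lt
  subset := hs.subset
  preserves hα X hX hpos := hs.preserves hα X hX fun ξ hξ => (h ξ hξ).symm ▸ hpos ξ hξ

lemma exists_isStage {b : Ordinal.{u} → Set ℕ} (hb : TailSplittingSeq ℵ₁ b)
    {𝒳 : Set (Set ℕ)} (h𝒳 : 𝒳.Countable) {α : Ordinal.{u}} (hα : α < ω₁)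
    {c : Ordinal.{u} → Set ℕ} (hc : ∀ ξ < α, (c ξ).Infinite)
    (hdec : ∀ η ξ, η ≤ ξ → ξ < α → (c ξ \ c η).Finite) : ∃ d ζ, IsStage b 𝒳 α c d ζ := by
  rcases eq_or_ne α 0 with rfl | hα0
  · exact ⟨b 0, 0, hb.1 0 (by simpa [ord_aleph] using hα), by simp, le_rfl, hα, subset_rfl,
      fun h => (lt_irrefl 0 h).elim⟩
  obtain ⟨d, hd, hdc, hdX⟩ := exists_pseudoIntersection_of_lt_omega_one hα hα0 hc hdec h𝒳
  let 𝒴 := insert d ((d ∩ ·) '' {X ∈ 𝒳 | (d ∩ X).Infinite})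
  have h𝒴 : 𝒴.Countable := ((h𝒳.mono (sep_subset _ _)).image _).insert d
  have hinf : ∀ Y ∈ 𝒴, Y.Infinite := by
    rintro Y (rfl | ⟨X, ⟨-, hX⟩, rfl⟩)
    exacts [hd, hX]
  obtain ⟨ζ, hαζ, hζ, hsplit⟩ := hb.exists_splits_of_countable h𝒴 hinf hα
  refine ⟨b ζ ∩ d, ζ, (hsplit d (mem_insert _ _)).1, fun ξ hξ => (hdc ξ hξ).subset ?_, hαζ, hζ,
    inter_subset_left, fun _ X hX hpos => ?_⟩
  · exact sdiff_le_sdiff_right inter_subset_right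
  · have hdX' : (d ∩ X).Infinite := hdX X hX hpos
    rw [inter_assoc]
    exact (hsplit _ (mem_insert_of_mem _ ⟨X, ⟨hX, hdX'⟩, rfl⟩)).1

lemma exists_forall_of_wellFounded_step {ι β : Type*} [Preorder ι] [WellFoundedLT ι]
    [Nonempty β] (P : ι → (ι → β) → β → Prop)
    (hP : ∀ i s t x, (∀ j < i, s j = t j) → P i s x → P i t x)
    (hstep : ∀ i s, (∀ j < i, P j s (s j)) → ∃ x, P i s x) :
    ∃ s : ι → β, ∀ i, P i s (s i) := by
  classical
  let s : ι → β := wellFounded_lt.fix fun i rec =>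
    Classical.epsilon (P i fun j => if h : j < i then rec j h else Classical.arbitrary β)
  refine ⟨s, fun i => WellFoundedLT.induction (motive := fun i => P i s (s i)) i fun i ih => ?_⟩
  let t : ι → β := fun j => if j < i then s j else Classical.arbitrary β
  have hts (j : ι) (hj : j < i) : t j = s j := if_pos hj
  have hs : s i = Classical.epsilon (P i t) := wellFounded_lt.fix_eq _ _
  obtain ⟨x, hx⟩ := hstep i t fun j hj => hts j hj ▸
    hP j s t (s j) (fun k hk => (hts k (hk.trans hj)).symm) (ih j hj)
  rw [hs]
  exact hP i t s _ hts (Classical.epsilon_spec ⟨x, hx⟩)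

theorem exists_seq_isStage {b : Ordinal.{u} → Set ℕ} (hb : TailSplittingSeq ℵ₁ b)
    {𝒳 : Ordinal.{u} → Set (Set ℕ)} (h𝒳 : ∀ α < ω₁, (𝒳 α).Countable) :
    ∃ (c : Ordinal.{u} → Set ℕ) (ζ : Ordinal.{u} → Ordinal.{u}),
      ∀ α < ω₁, IsStage b (𝒳 α) α c (c α) (ζ α) := by
  let P (α : Ordinal.{u}) (s : Ordinal.{u} → Set ℕ × Ordinal.{u}) (x : Set ℕ × Ordinal.{u}) :=
    α < ω₁ → IsStage b (𝒳 α) α (fun ξ => (s ξ).1) x.1 x.2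
  have hstep (α : Ordinal.{u}) (s) (ih : ∀ ξ < α, P ξ s (s ξ)) : ∃ x, P α s x := by
    by_cases hα : α < ω₁
    · have hprev (ξ) (hξ : ξ < α) := ih ξ hξ (hξ.trans hα)
      obtain ⟨d, ζ, h⟩ := exists_isStage hb (h𝒳 α hα) hα (fun ξ hξ => (hprev ξ hξ).infinite)
        fun η ξ hηξ hξ => hηξ.eq_or_lt.elim (fun h => by simp [h])
          fun h => (hprev ξ hξ).almost_subset η h
      exact ⟨(d, ζ), fun _ => h⟩
    · exact ⟨(∅, 0), fun h => absurd h hα⟩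
  obtain ⟨s, hs⟩ := exists_forall_of_wellFounded_step P
    (fun α s t x hst h hα => (h hα).congr fun ξ hξ => by rw [hst ξ hξ]) hstep
  exact ⟨fun α => (s α).1, fun α => (s α).2, hs⟩

lemma Filter.mem_generate_inf_cofinite_iff {α : Type*} {𝒞 : Set (Set α)} (hne : 𝒞.Nonempty)
    (hdir : DirectedOn (fun C D => (D \ C).Finite) 𝒞) {s : Set α} :
    s ∈ Filter.generate 𝒞 ⊓ Filter.cofinite ↔ ∃ C ∈ 𝒞, (C \ s).Finite := by
  have hmem (C t : Set α) : t ∈ Filter.principal C ⊓ Filter.cofinite ↔ (C \ t).Finite := by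
    rw [inf_comm, Filter.mem_inf_principal, Filter.mem_cofinite]
    exact iff_of_eq (congrArg _ (by ext; simp))
  rw [Filter.generate_eq_biInf, biInf_inf hne, Filter.mem_biInf_of_directed _ hne]
  · simp only [hmem]
  · intro C hC D hD
    obtain ⟨E, hE, hCE, hDE⟩ := hdir C hC D hD
    exact ⟨E, hE, le_inf (Filter.le_principal_iff.mpr ((hmem E C).mpr hCE)) inf_le_right,
      le_inf (Filter.le_principal_iff.mpr ((hmem E D).mpr hDE)) inf_le_right⟩

def towerFilter (c : Ordinal.{u} → Set ℕ) : Filter ℕ :=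
  Filter.generate {x | ∃ α < ω₁, x = c α} ⊓ Filter.cofinite

section towerFilter

variable {c : Ordinal.{u} → Set ℕ} (hdec : ∀ α β, α ≤ β → β < ω₁ → (c β \ c α).Finite)
include hdec

lemma mem_towerFilter_iff {s : Set ℕ} : s ∈ towerFilter c ↔ ∃ α < ω₁, (c α \ s).Finite := by
  have hne : {x | ∃ α < ω₁, x = c α}.Nonempty := ⟨c 0, 0, omega_pos 1, rfl⟩
  rw [towerFilter, Filter.mem_generate_inf_cofinite_iff hne]
  · constructor
    · rintro ⟨_, ⟨α, hα, rfl⟩, h⟩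
      exact ⟨α, hα, h⟩
    · rintro ⟨α, hα, h⟩
      exact ⟨_, ⟨α, hα, rfl⟩, h⟩
  · rintro _ ⟨α, hα, rfl⟩ _ ⟨β, hβ, rfl⟩
    exact ⟨c (max α β), ⟨_, max_lt hα hβ, rfl⟩, hdec _ _ (le_max_left _ _) (max_lt hα hβ),
      hdec _ _ (le_max_right _ _) (max_lt hα hβ)⟩

lemma compl_notMem_towerFilter_iff {s : Set ℕ} :
    sᶜ ∉ towerFilter c ↔ ∀ α < ω₁, (c α ∩ s).Infinite := by
  simp only [mem_towerFilter_iff hdec, sdiff_compl, not_exists, not_and]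
  rfl

lemma empty_notMem_towerFilter (hc : ∀ α < ω₁, (c α).Infinite) : ∅ ∉ towerFilter c := by
  simpa [← compl_univ, compl_notMem_towerFilter_iff hdec] using hc

lemma exists_pseudoIntersection_mem_towerFilter (hc : ∀ α < ω₁, (c α).Infinite)
    (d : ℕ → Set ℕ) (hd : ∀ n, d n ∈ towerFilter c) :
    ∃ A ∈ towerFilter c, A.Infinite ∧ ∀ n, (A \ d n).Finite := by
  choose α hα hfin using fun n => (mem_towerFilter_iff hdec).mp (hd n)
  have hsup : ⨆ n, α n < ω₁ := Ordinal.iSup_lt_omega_one hα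
  refine ⟨c (⨆ n, α n), (mem_towerFilter_iff hdec).mpr ⟨_, hsup, by simp⟩, hc _ hsup,
    fun n => ?_⟩
  exact (hdec _ _ (Ordinal.le_iSup α n) hsup).diff_trans (hfin n)

end towerFilter

lemma Filter.infinite_image_inter_of_compl_mem {α β : Type*} {H : Filter α} {A D : Set α}
    {f : α → β} (hA : A ∈ H) (hD : Dᶜ ∉ H) (hfib : ∀ y, {x ∈ D | f x = y}ᶜ ∈ H) :
    (f '' (A ∩ D)).Infinite := by
  intro hfin
  refine hD (Filter.mem_of_superset (Filter.inter_mem hA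
    ((Filter.biInter_mem hfin).mpr fun y _ => hfib y)) ?_)
  rintro x ⟨hxA, hx⟩ hxD
  exact mem_iInter₂.mp hx (f x) ⟨x, ⟨hxA, hxD⟩, rfl⟩ ⟨hxD, rfl⟩

lemma infinite_inter_of_forall_preserves {c : Ordinal.{u} → Set ℕ}
    {𝒳 : Ordinal.{u} → Set (Set ℕ)}
    (hpres : ∀ α < ω₁, 0 < α → ∀ X ∈ 𝒳 α, (∀ ξ < α, (c ξ ∩ X).Infinite) → (c α ∩ X).Infinite)
    {X : Set ℕ} {α : Ordinal.{u}} (hα : 0 < α) (hX : ∀ ξ, α ≤ ξ → ξ < ω₁ → X ∈ 𝒳 ξ)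
    (hbelow : ∀ ξ < α, (c ξ ∩ X).Infinite) : ∀ ξ < ω₁, (c ξ ∩ X).Infinite := by
  intro ξ
  induction ξ using WellFoundedLT.induction with
  | _ ξ ih =>
    intro hξ
    rcases lt_or_ge ξ α with h | h
    · exact hbelow ξ h
    · exact hpres ξ hξ (hα.trans_le h) X (hX ξ h hξ) fun η hη => ih η hη (hη.trans hξ)

def preimageSets (F : Ordinal.{u} → Set ℕ × (ℕ → ℕ)) (a : Ordinal.{u} → Set ℕ)
    (ξ : Ordinal.{u}) : Set (Set ℕ) :=
  ⋃ γ ∈ Iic ξ, ⋃ δ ∈ Iic ξ, {{m ∈ (F γ).1 | (F γ).2 m ∈ a δ}, {m ∈ (F γ).1 | (F γ).2 m ∉ a δ}}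

lemma countable_preimageSets (F : Ordinal.{u} → Set ℕ × (ℕ → ℕ)) (a : Ordinal.{u} → Set ℕ)
    {ξ : Ordinal.{u}} (hξ : ξ < ω₁) : (preimageSets F a ξ).Countable :=
  (countable_Iic_of_lt_omega_one hξ).biUnion fun _ _ =>
    (countable_Iic_of_lt_omega_one hξ).biUnion fun _ _ => (toFinite _).countable

theorem towerFilter_star_of_preserves {a : Ordinal.{u} → Set ℕ} (ha : ClubSplittingSeq ℵ₁ a)
    {F : Ordinal.{u} → Set ℕ × (ℕ → ℕ)} (hF : SurjOn F (Iio ω₁) univ)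
    {c : Ordinal.{u} → Set ℕ} (hdec : ∀ α β, α ≤ β → β < ω₁ → (c β \ c α).Finite)
    (hpres : ∀ α < ω₁, 0 < α → ∀ X ∈ preimageSets F a α,
      (∀ ξ < α, (c ξ ∩ X).Infinite) → (c α ∩ X).Infinite)
    {dom : Set ℕ} {f : ℕ → ℕ} (hdom : domᶜ ∉ towerFilter c)
    (hfib : ∀ n, {m ∈ dom | f m = n}ᶜ ∈ towerFilter c) :
    ∃ S, IsClubIn ω₁ S ∧ ∀ α ∈ S,
      {m ∈ dom | f m ∈ a α}ᶜ ∉ towerFilter c ∧ {m ∈ dom | f m ∉ a α}ᶜ ∉ towerFilter c := by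
  simp only [ClubSplittingSeq, ord_aleph] at ha
  have himg (ξ : Ordinal.{u}) (hξ : ξ < ω₁) : (f '' (c ξ ∩ dom)).Infinite :=
    Filter.infinite_image_inter_of_compl_mem
      ((mem_towerFilter_iff hdec).mpr ⟨ξ, hξ, by simp⟩) hdom hfib
  have hclub (ξ : Ordinal.{u}) : ∃ S, ξ < ω₁ →
      IsClubIn ω₁ S ∧ ∀ α ∈ S, Splits (a α) (f '' (c ξ ∩ dom)) := by
    by_cases hξ : ξ < ω₁
    · obtain ⟨S, hS⟩ := ha.2 _ (himg ξ hξ)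
      exact ⟨S, fun _ => hS⟩
    · exact ⟨∅, fun h => absurd h hξ⟩
  choose S hS using hclub
  obtain ⟨γ₀, hγ₀, hFγ₀⟩ := hF (mem_univ (dom, f))
  refine ⟨{α | α < ω₁ ∧ ∀ ξ < α, α ∈ S ξ} ∩ Ioi γ₀,
    (isClubIn_diagonal fun ξ hξ => (hS ξ hξ).1).inter_Ioi (isSuccLimit_omega 1) hγ₀, ?_⟩
  rintro α ⟨⟨hα, hαS⟩, hγ₀α⟩
  -- positivity for `c ξ` holds for `ξ < α` by splitting, and for `ξ ≥ α` because stage `ξ`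
  -- preserves it
  have hpos {s : Set ℕ} (hs : ∀ ξ < α, (s ∩ f '' (c ξ ∩ dom)).Infinite)
      (hX : ∀ ξ, α ≤ ξ → ξ < ω₁ → {m ∈ dom | f m ∈ s} ∈ preimageSets F a ξ) :
      {m ∈ dom | f m ∈ s}ᶜ ∉ towerFilter c := by
    refine (compl_notMem_towerFilter_iff hdec).mpr <|
      infinite_inter_of_forall_preserves hpres (zero_le.trans_lt hγ₀α) hX fun ξ hξ => ?_
    refine fun hfin => hs ξ hξ ((hfin.image f).subset ?_)
    rintro _ ⟨hy, x, ⟨hxc, hxd⟩, rfl⟩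
    exact ⟨x, ⟨hxc, hxd, hy⟩, rfl⟩
  have hmem (ξ : Ordinal.{u}) (hξ : α ≤ ξ) : (F γ₀).1 = dom ∧ (F γ₀).2 = f ∧
      γ₀ ∈ Iic ξ ∧ α ∈ Iic ξ := ⟨by rw [hFγ₀], by rw [hFγ₀], hγ₀α.le.trans hξ, hξ⟩
  refine ⟨hpos (fun ξ hξ => ((hS ξ (hξ.trans hα)).2 α (hαS ξ hξ)).1) fun ξ hξ _ => ?_,
    hpos (s := (a α)ᶜ) (fun ξ hξ => by
      simpa [inter_comm, sdiff_eq] using ((hS ξ (hξ.trans hα)).2 α (hαS ξ hξ)).2)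
      fun ξ hξ _ => ?_⟩
  all_goals
    obtain ⟨hdomF, hfF, hγ₀ξ, hαξ⟩ := hmem ξ hξ
    refine mem_iUnion₂.mpr ⟨γ₀, hγ₀ξ, mem_iUnion₂.mpr ⟨α, hαξ, ?_⟩⟩
    simp [hdomF, hfF]

/-- Under CH, from a club-splitting sequence `⟨a_α⟩` and a tail-splitting sequence
`⟨b_α⟩` one can build a `⊆*`-decreasing sequence `⟨c_α⟩` with `c_α ⊆ b_{ζ_α}`,
`ζ_α ≥ α`, generating (together with the cofinite sets) a proper P-filter `H`
such that `(⋆)_{Ā,H}` holds. -/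
theorem CH_Pfilter_star
    (hCH : (2 : Cardinal) ^ Cardinal.aleph0 = Cardinal.aleph 1)
    (a : Ordinal → Set ℕ) (ha : ClubSplittingSeq (Cardinal.aleph 1) a)
    (b : Ordinal → Set ℕ) (hb : TailSplittingSeq (Cardinal.aleph 1) b) :
    ∃ (c : Ordinal → Set ℕ) (ζ : Ordinal → Ordinal) (H : Filter ℕ),
      (∀ α < omega1, (c α).Infinite) ∧
      (∀ α β : Ordinal, α ≤ β → β < omega1 → (c β \ c α).Finite) ∧
      (∀ α < omega1, α ≤ ζ α ∧ ζ α < omega1 ∧ c α ⊆ b (ζ α)) ∧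
      H = Filter.generate {x : Set ℕ | ∃ α < omega1, x = c α} ⊓ Filter.cofinite ∧
      (∅ ∉ H) ∧
      (∀ d : ℕ → Set ℕ, (∀ n, d n ∈ H) →
        ∃ A ∈ H, A.Infinite ∧ ∀ n, (A \ d n).Finite) ∧
      (∀ (dom : Set ℕ) (f : ℕ → ℕ), domᶜ ∉ H →
        (∀ n : ℕ, {m ∈ dom | f m = n}ᶜ ∈ H) →
        ∃ S : Set Ordinal, IsClubIn omega1 S ∧ ∀ α ∈ S,
          {m ∈ dom | f m ∈ a α}ᶜ ∉ H ∧ {m ∈ dom | f m ∉ a α}ᶜ ∉ H) := by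
  simp only [omega1_eq_omega_one]
  have hCH₀ : continuum.{0} = ℵ₁ := continuum_eq_aleph_one_lift (two_power_aleph0 ▸ hCH)
  obtain ⟨F, hF⟩ := exists_surjOn_Iio_omega_one (mk_set_nat_prod_nat_fun.trans_le hCH₀.le)
  -- `a` and `b` are indexed by ordinals of different universes: move `a` to the one of `b`
  let e : Iio ω₁ ≃o Iio ω₁ := Ordinal.iioOrderIsoOfLiftEq (by simp)
  have ha' := ha.comp_orderIso e
  set a' := fun β => if h : β < ω₁ then a (e ⟨β, h⟩) else ∅
  obtain ⟨c, ζ, hc⟩ := exists_seq_isStage hb (𝒳 := preimageSets F a') fun α hα =>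
    countable_preimageSets F a' hα
  have hinf (α) (hα : α < ω₁) : (c α).Infinite := (hc α hα).infinite
  have hdec (α β) (hαβ : α ≤ β) (hβ : β < ω₁) : (c β \ c α).Finite :=
    hαβ.eq_or_lt.elim (fun h => by simp [h]) fun h => (hc β hβ).almost_subset α h
  refine ⟨c, ζ, towerFilter c, hinf, hdec,
    fun α hα => ⟨(hc α hα).le_index, (hc α hα).index_lt, (hc α hα).subset⟩, rfl,
    empty_notMem_towerFilter hdec hinf, exists_pseudoIntersection_mem_towerFilter hdec hinf,
    fun dom f hdom hfib => ?_⟩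
  obtain ⟨S, hS, hsplit⟩ := towerFilter_star_of_preserves ha' hF hdec
    (fun α hα => (hc α hα).preserves) hdom hfib
  refine ⟨_, hS.image_orderIso e, ?_⟩
  rintro _ ⟨β, hβS, rfl⟩
  have ha'β : a' β = a (e β) := dif_pos (show (β : Ordinal) < ω₁ from β.2)
  simpa [ha'β] using hsplit β hβS
end
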